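/- arXiv:math/0407468 — 4 statements merged into one kernel-verified Lean document; each statement's English description precedes it below -/
import Mathlib

section
/- For any choice of complex coefficient matrices A ∈ M_{t×r}(ℂ) and B ∈ M_{t×s}(ℂ), the polynomial Δ_{(D,E,F),(A,B)} is invariant under U_n × U_k × U_ℓ; that is, Δ_{(D,E,F),(A,B)} is a GL_n × GL_k × GL_ℓ highest weight vector and lies in TA_{n,k,ℓ}. -/
open MvPolynomial Matrix Finset

namespace HTW

/-! ## The polynomial ring `P(M_{n,k+ℓ})` and its matrix-entry variables -/

/-- Variable index set for the polynomial ring on `n × K` matrices: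
a variable for each matrix entry. -/
abbrev Vars (n K : ℕ) := Fin n × Fin K

/-- The polynomial ring `P(M_{n,K})` on complex `n × K` matrices. -/
abbrev PolyRing (n K : ℕ) := MvPolynomial (Vars n K) ℂ

/-- The variable `x_{ab}` (0-based), the `(a,b)` entry of the left `n × k` block `X`
of `Z = [X Y]`; junk value `0` out of range. -/
noncomputable def xvar (n k l : ℕ) (a b : ℕ) : PolyRing n (k + l) :=
  if h : a < n ∧ b < k then X (⟨a, h.1⟩, ⟨b, by omega⟩) else 0

/-- The variable `y_{ac}` (0-based), the `(a,c)` entry of the right `n × ℓ` block `Y`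
of `Z = [X Y]`; junk value `0` out of range. -/
noncomputable def yvar (n k l : ℕ) (a c : ℕ) : PolyRing n (k + l) :=
  if h : a < n ∧ c < l then X (⟨a, h.1⟩, ⟨k + c, by omega⟩) else 0

/-- Extension of a partition given on `Fin r` to all of `ℕ` by zero. -/
def ext {r : ℕ} (d : Fin r → ℕ) : ℕ → ℕ := fun i => if h : i < r then d ⟨i, h⟩ else 0

/-! ## The block determinants `Δ_{(D,E,F),(A,B)}` -/

/-- Row index type for the block matrix `Z̃`: superrows of heights `f 0, …, f (t-1)`. -/
abbrev RowIdx {t : ℕ} (f : Fin t → ℕ) := (j : Fin t) × Fin (f j)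

noncomputable def sigmaFinEquiv {t : ℕ} (f : Fin t → ℕ) :
    ((j : Fin t) × Fin (f j)) ≃ Fin (∑ j, f j) :=
  Fintype.equivFinOfCardEq (by simp)

/-- Identification of the column index set (supercolumns of widths
`d 0, …, d (r-1), e 0, …, e (s-1)`) with the row index set, using `|D| + |E| = |F|`. -/
noncomputable def colEquiv {r s t : ℕ} (d : Fin r → ℕ) (e : Fin s → ℕ) (f : Fin t → ℕ)
    (hsum : (∑ i, d i) + (∑ i, e i) = ∑ j, f j) :
    ((i : Fin r) × Fin (d i)) ⊕ ((i : Fin s) × Fin (e i)) ≃ RowIdx f :=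
  (Equiv.sumCongr (sigmaFinEquiv d) (sigmaFinEquiv e)).trans
    (finSumFinEquiv.trans ((finCongr hsum).trans (sigmaFinEquiv f).symm))

/-- The polynomial `Δ_{(D,E,F),(A,B)}` for complex coefficient matrices `A`, `B`:
the determinant of the `|F| × |F|` block matrix `Z̃` with blocks
`α_{jc}·X_{f_j,d_c}` and `β_{jc}·Y_{f_j,e_c}`. -/
noncomputable def Delta (n k l : ℕ) {r s t : ℕ} (d : Fin r → ℕ) (e : Fin s → ℕ)
    (f : Fin t → ℕ) (hsum : (∑ i, d i) + (∑ i, e i) = ∑ j, f j)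
    (A : Fin t → Fin r → ℂ) (B : Fin t → Fin s → ℂ) : PolyRing n (k + l) :=
  Matrix.det (Matrix.of fun i j : RowIdx f =>
    match (colEquiv d e f hsum).symm j with
    | Sum.inl c => MvPolynomial.C (A i.1 c.1) * xvar n k l i.2 c.2
    | Sum.inr c => MvPolynomial.C (B i.1 c.1) * yvar n k l i.2 c.2)

/-- The ring of polynomials in the indeterminates `β_{ih}` with coefficients in
`P(M_{n,k+ℓ})`. -/
abbrev BRing (n k l t s : ℕ) := MvPolynomial (Fin t × Fin s) (PolyRing n (k + l))

/-- The polynomial `Δ_{(D,E,F),(J,B)}` where `J = J_{t,r}` has ones on the diagonal and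
zeros elsewhere and `B` is a matrix of indeterminates `β_{ih}`; an element of the
polynomial ring in the `β_{ih}` over `P(M_{n,k+ℓ})`. -/
noncomputable def DeltaJB (n k l : ℕ) {r s t : ℕ} (d : Fin r → ℕ) (e : Fin s → ℕ)
    (f : Fin t → ℕ) (hsum : (∑ i, d i) + (∑ i, e i) = ∑ j, f j) : BRing n k l t s :=
  Matrix.det (Matrix.of fun i j : RowIdx f =>
    match (colEquiv d e f hsum).symm j with
    | Sum.inl c => if (i.1 : ℕ) = (c.1 : ℕ)
        then (MvPolynomial.C (xvar n k l i.2 c.2) : BRing n k l t s) else 0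
    | Sum.inr c => (X (i.1, c.1) : BRing n k l t s) * MvPolynomial.C (yvar n k l i.2 c.2))

/-- The coefficient `Δ_{(D,E,F),M}` of the monomial `∏ β_{ih}^{m_{ih}}` in the expansion
of `Δ_{(D,E,F),(J,B)}`; a polynomial in the `x_{ab}` and `y_{ac}`. -/
noncomputable def DeltaCoeff (n k l : ℕ) {r s t : ℕ} (d : Fin r → ℕ) (e : Fin s → ℕ)
    (f : Fin t → ℕ) (hsum : (∑ i, d i) + (∑ i, e i) = ∑ j, f j)
    (M : Fin t × Fin s →₀ ℕ) : PolyRing n (k + l) :=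
  MvPolynomial.coeff M (DeltaJB n k l d e f hsum)

/-! ## The tensor product algebra `TA_{n,k,ℓ}` -/

/-- `u` is upper triangular unipotent. -/
def IsUpperUni {m : ℕ} (u : Matrix (Fin m) (Fin m) ℂ) : Prop :=
  (∀ i, u i i = 1) ∧ ∀ i j : Fin m, j < i → u i j = 0

/-- Substitution on `P(M_{n,K})` corresponding to the action of `g ∈ GL_n` by
`(g·p)(Z) = p(g⁻¹·Z) = p(gᵗZ)`, i.e. `Z_{ab} ↦ ∑_c g_{ca} Z_{cb}`. -/
noncomputable def leftSub (n K : ℕ) (g : Matrix (Fin n) (Fin n) ℂ) :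
    PolyRing n K →ₐ[ℂ] PolyRing n K :=
  aeval fun v : Vars n K => ∑ c : Fin n, MvPolynomial.C (g c v.1) * X (c, v.2)

/-- Substitution on `P(M_{n,K})` corresponding to the action of `h ∈ GL_K` by
`(h·p)(Z) = p(h⁻¹·Z) = p(Z h)`, i.e. `Z_{ab} ↦ ∑_c Z_{ac} h_{cb}`. -/
noncomputable def rightSub (n K : ℕ) (g : Matrix (Fin K) (Fin K) ℂ) :
    PolyRing n K →ₐ[ℂ] PolyRing n K :=
  aeval fun v : Vars n K => ∑ c : Fin K, MvPolynomial.C (g c v.2) * X (v.1, c)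

/-- The block diagonal embedding of `GL_k × GL_ℓ` into `GL_{k+ℓ}`. -/
noncomputable def blockDiag (k l : ℕ) (u1 : Matrix (Fin k) (Fin k) ℂ)
    (u2 : Matrix (Fin l) (Fin l) ℂ) : Matrix (Fin (k + l)) (Fin (k + l)) ℂ :=
  (Matrix.fromBlocks u1 0 0 u2).submatrix finSumFinEquiv.symm finSumFinEquiv.symm

/-- The `GL_n` tensor product algebra
`TA_{n,k,ℓ} = P(M_{n,k+ℓ})^{U_k × U_ℓ × U_n}`, as a subspace of `P(M_{n,k+ℓ})`. -/
noncomputable def TA (n k l : ℕ) : Submodule ℂ (PolyRing n (k + l)) where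
  carrier := {p | ∀ (u3 : Matrix (Fin n) (Fin n) ℂ) (u1 : Matrix (Fin k) (Fin k) ℂ)
    (u2 : Matrix (Fin l) (Fin l) ℂ), IsUpperUni u3 → IsUpperUni u1 → IsUpperUni u2 →
    leftSub n (k + l) u3 p = p ∧ rightSub n (k + l) (blockDiag k l u1 u2) p = p}
  add_mem' := by
    intro a b ha hb u3 u1 u2 h3 h1 h2
    refine ⟨?_, ?_⟩
    · rw [map_add, (ha u3 u1 u2 h3 h1 h2).1, (hb u3 u1 u2 h3 h1 h2).1]
    · rw [map_add, (ha u3 u1 u2 h3 h1 h2).2, (hb u3 u1 u2 h3 h1 h2).2]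
  zero_mem' := by
    intro u3 u1 u2 _ _ _
    exact ⟨map_zero _, map_zero _⟩
  smul_mem' := by
    intro c a ha u3 u1 u2 h3 h1 h2
    refine ⟨?_, ?_⟩
    · rw [_root_.map_smul, (ha u3 u1 u2 h3 h1 h2).1]
    · rw [_root_.map_smul, (ha u3 u1 u2 h3 h1 h2).2]

/-- The `i`-th part (0-based `i`) of the transpose of the partition `f`:
`(F^t)_{i+1} = #{j : f_j ≥ i+1}`. -/
def tpart {m : ℕ} (f : Fin m → ℕ) (i : ℕ) : ℕ :=
  (Finset.univ.filter fun j => i < f j).card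

/-! ## Skew diagrams and Littlewood–Richardson tableaux -/

/-- `c'` lies (strictly) northeast of `c`: weakly higher row, weakly further right
column, and not the same cell.  Cells are `(row, column)`, `0`-based, rows increasing
downwards. -/
def NEcell (c' c : ℕ × ℕ) : Prop := c'.1 ≤ c.1 ∧ c.2 ≤ c'.2 ∧ c' ≠ c

instance (c' c : ℕ × ℕ) : Decidable (NEcell c' c) :=
  inferInstanceAs (Decidable (c'.1 ≤ c.1 ∧ c.2 ≤ c'.2 ∧ c' ≠ c))

/-- A finite set of cells `(row, column)` is a skew Young diagram if its columns are
intervals `[dd i, ff i)` for antitone functions `dd ≤ ff`. -/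
def IsSkewDiagram (S : Finset (ℕ × ℕ)) : Prop :=
  ∃ dd ff : ℕ → ℕ, Antitone dd ∧ Antitone ff ∧ (∀ i, dd i ≤ ff i) ∧
    ∀ c : ℕ × ℕ, c ∈ S ↔ dd c.2 ≤ c.1 ∧ c.1 < ff c.2

/-- A Littlewood–Richardson skew tableau: a filling of a skew Young diagram by positive
integers (constant `0` off the diagram) which is semistandard (LR1) and satisfies the
lattice condition (LR2). -/
structure LRTableau where
  /-- the entry in each cell `(row, column)` (`0` off the diagram) -/
  entry : ℕ × ℕ → ℕ
  /-- the underlying set of cells -/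
  supp : Finset (ℕ × ℕ)
  mem_supp : ∀ c, c ∈ supp ↔ entry c ≠ 0
  skew : IsSkewDiagram supp
  /-- (LR1) rows weakly increase from left to right -/
  row_weak : ∀ a i i', i ≤ i' → (a, i) ∈ supp → (a, i') ∈ supp →
    entry (a, i) ≤ entry (a, i')
  /-- (LR1) columns strictly increase from top to bottom -/
  col_strict : ∀ a a' i, a < a' → (a, i) ∈ supp → (a', i) ∈ supp →
    entry (a, i) < entry (a', i)
  /-- (LR2) for `m ≥ 2`, the number of occurrences of `m` in the first `p` rows is at
  most the number of occurrences of `m - 1` in the first `p - 1` rows -/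
  lattice : ∀ m p, 2 ≤ m →
    (supp.filter fun c => c.1 < p ∧ entry c = m).card ≤
      (supp.filter fun c => c.1 + 1 < p ∧ entry c = m - 1).card

/-- The cells of the skew diagram `F^t - D^t`: the `i`-th column consists of the cells
in rows `d_i, …, f_i - 1` (0-based). -/
def shape {r t : ℕ} (d : Fin r → ℕ) (f : Fin t → ℕ) : Finset (ℕ × ℕ) :=
  (Finset.range (∑ j, f j) ×ˢ Finset.range t).filter
    fun c => ext d c.2 ≤ c.1 ∧ c.1 < ext f c.2

/-- `T` is an LR tableau of shape `F^t - D^t` and content `E^t`: the number of entries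
equal to `v` is `(E^t)_v = #{h : e_h ≥ v}`. -/
def IsLRofShape {r s t : ℕ} (T : LRTableau) (d : Fin r → ℕ) (e : Fin s → ℕ)
    (f : Fin t → ℕ) : Prop :=
  T.supp = shape d f ∧
    ∀ v : ℕ, 1 ≤ v →
      (T.supp.filter fun c => T.entry c = v).card =
        (Finset.univ.filter fun h : Fin s => v ≤ e h).card

/-! ## The standard peeling -/

/-- The cells selected by one peeling step: those cells such that no other cell with the
same entry lies northeast of them.  For an LR tableau these are the cells
`C_1(1), …, C_1(ℓ_0)`. -/
def selected (ent : ℕ × ℕ → ℕ) (S : Finset (ℕ × ℕ)) : Finset (ℕ × ℕ) :=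
  S.filter fun c => ∀ c' ∈ S, ent c' = ent c → ¬ NEcell c' c

/-- One step of the standard peeling: remove the selected cells. -/
def peel (ent : ℕ × ℕ → ℕ) (S : Finset (ℕ × ℕ)) : Finset (ℕ × ℕ) := S \ selected ent S

/-- `m_{ih}(T)` (0-based `i`, `h`): the number of cells removed at the `(h+1)`-st step of
the standard peeling of `T` that lie in the `(i+1)`-st column of `F^t`. -/
def peelCount (T : LRTableau) (i h : ℕ) : ℕ :=
  ((selected T.entry ((peel T.entry)^[h] T.supp)).filter fun c => c.2 = i).card

/-- The exponent matrix `M(T) = (m_{ih}(T))` of the monomial `∏ β_{ih}^{m_{ih}}`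
associated to an LR tableau `T`. -/
noncomputable def MT (T : LRTableau) (t s : ℕ) : Fin t × Fin s →₀ ℕ :=
  Finsupp.equivFunOnFinite.symm fun p => peelCount T p.1 p.2

/-! ## The monomials `e(T)` and `ℰ(T)` -/

/-- The monomial `e(T) = ∏_{b ∈ T} y_{a(b), c(b)}` where `a(b)` is the row of the box
`b` and `c(b)` its entry (passing to 0-based indices). -/
noncomputable def eT (n k l : ℕ) (T : LRTableau) : PolyRing n (k + l) :=
  ∏ c ∈ T.supp, yvar n k l c.1 (T.entry c - 1)

/-- The monomial `ℰ(T) = e(T) · ∏_{c=1}^{r} ∏_{j=1}^{d_c} x_{jj}`. -/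
noncomputable def calE (n k l : ℕ) {r : ℕ} (d : Fin r → ℕ) (T : LRTableau) :
    PolyRing n (k + l) :=
  eT n k l T * ∏ c : Fin r, ∏ j ∈ Finset.range (d c), xvar n k l j j

/-! ## The matrix `Ỹ_o` -/

noncomputable def colEquivY {s t : ℕ} (e : Fin s → ℕ) (g : Fin t → ℕ)
    (hE : (∑ h, e h) = ∑ j, g j) : ((h : Fin s) × Fin (e h)) ≃ RowIdx g :=
  (sigmaFinEquiv e).trans ((finCongr hE).trans (sigmaFinEquiv g).symm)

/-- The matrix `Ỹ_o`, with `(j,h)` block `β_{jh}·Y_{(d_j,f_j],e_h}`. -/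
noncomputable def matYo (n k l : ℕ) {r s t : ℕ} (d : Fin r → ℕ) (e : Fin s → ℕ)
    (f : Fin t → ℕ) (hE : (∑ h, e h) = ∑ j, (f j - ext d j)) :
    Matrix (RowIdx fun j => f j - ext d j) (RowIdx fun j => f j - ext d j)
      (BRing n k l t s) :=
  Matrix.of fun i j =>
    (X (i.1, ((colEquivY e _ hE).symm j).1) : BRing n k l t s) *
      MvPolynomial.C (yvar n k l (ext d i.1 + (i.2 : ℕ))
        (((colEquivY e _ hE).symm j).2 : ℕ))

/-- `det Ỹ_o`, a polynomial in the `β_{ih}` with coefficients in `ℂ[y_{ac}]`. -/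
noncomputable def detYo (n k l : ℕ) {r s t : ℕ} (d : Fin r → ℕ) (e : Fin s → ℕ)
    (f : Fin t → ℕ) (hE : (∑ h, e h) = ∑ j, (f j - ext d j)) : BRing n k l t s :=
  Matrix.det (matYo n k l d e f hE)

/-! ## The monomial order on the `y` variables -/

/-- Priority key of a variable: variables with smaller key are larger in the order
`y_{11} > y_{21} > ⋯ > y_{n1} > y_{12} > ⋯`. -/
def varKey {n K : ℕ} (v : Vars n K) : ℕ := (v.2 : ℕ) * n + (v.1 : ℕ)

/-- Graded lexicographic order on monomials (exponent vectors): first compare total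
degrees, then compare lexicographically, larger variables first. -/
def MonLt {n K : ℕ} (m1 m2 : Vars n K →₀ ℕ) : Prop :=
  (m1.sum fun _ x => x) < (m2.sum fun _ x => x) ∨
    ((m1.sum fun _ x => x) = (m2.sum fun _ x => x) ∧
      ∃ v, m1 v < m2 v ∧ ∀ w, varKey w < varKey v → m1 w = m2 w)


/-! ## Further shared definitions -/

/-- The exponent vector of the single variable `y_{ac}` (0-based); zero out of range. -/
noncomputable def yIdx (n k l : ℕ) (a c : ℕ) : Vars n (k + l) →₀ ℕ :=
  if h : a < n ∧ c < l then Finsupp.single (⟨a, h.1⟩, ⟨k + c, by omega⟩) 1 else 0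

/-- The exponent vector of the monomial `e(T)`. -/
noncomputable def eVec (n k l : ℕ) (T : LRTableau) : Vars n (k + l) →₀ ℕ :=
  ∑ c ∈ T.supp, yIdx n k l c.1 (T.entry c - 1)

/-- `i(h)` (0-based): the largest index `i` such that `m_{ih}(T) > 0`, i.e. the
rightmost column of `F^t` receiving a cell at the `(h+1)`-st peeling step. -/
def iNat (T : LRTableau) (t : ℕ) (h : ℕ) : ℕ :=
  Finset.sup ((Finset.range t).filter fun i => 0 < peelCount T i h) id

/-- The `y`-monomial `m` occurs in `p` (a polynomial in the `β_{ih}` over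
`ℂ[x_{ab}, y_{ac}]`) if it occurs in some `β`-coefficient of `p`. -/
def occursY {n k l t s : ℕ} (p : BRing n k l t s) (m : Vars n (k + l) →₀ ℕ) : Prop :=
  ∃ M : Fin t × Fin s →₀ ℕ, m ∈ (MvPolynomial.coeff M p).support

/-- `m` is the leading `y`-monomial of `p` for the order `MonLt`. -/
def IsLeadY {n k l t s : ℕ} (p : BRing n k l t s) (m : Vars n (k + l) →₀ ℕ) : Prop :=
  occursY p m ∧ ∀ m', occursY p m' → m' = m ∨ MonLt m' m

/-! ### Auxiliary machinery for the invariance proof -/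

/-- A triangular matrix (with respect to an injective `ℕ`-valued key) with unit diagonal
has determinant one. -/
private lemma det_one_aux {α : Type*} [Fintype α] [DecidableEq α] {R : Type*} [CommRing R]
    (M : Matrix α α R) (key : α → ℕ) (hinj : Function.Injective key)
    (htri : ∀ p q, key q < key p → M p q = 0) (hdiag : ∀ p, M p p = 1) :
    M.det = 1 := by
  have hBT : Matrix.BlockTriangular M key := fun i j h => htri i j h
  rw [hBT.det]
  apply Finset.prod_eq_one
  intro a ha
  obtain ⟨p, -, hp⟩ := Finset.mem_image.mp ha
  haveI : Unique {i // key i = a} :=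
    ⟨⟨⟨p, hp⟩⟩, fun q => Subtype.ext (hinj (q.2.trans hp.symm))⟩
  rw [Matrix.det_unique,
    show (default : {i // key i = a}) = (⟨p, hp⟩ : {i // key i = a}) from (Unique.eq_default (⟨p, hp⟩ : {i // key i = a})).symm]
  exact hdiag p

private lemma key_aux {B j i j' i' : ℕ} (hB : 0 < B) (hi : i < B) (hi' : i' < B)
    (h : B * j + i = B * j' + i') : j = j' ∧ i = i' := by
  have e1 : (B * j + i) / B = j := by
    rw [Nat.mul_add_div hB, Nat.div_eq_of_lt hi, add_zero]
  have e2 : (B * j' + i') / B = j' := by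
    rw [Nat.mul_add_div hB, Nat.div_eq_of_lt hi', add_zero]
  have hj : j = j' := by rw [← e1, h, e2]
  subst hj
  exact ⟨rfl, Nat.add_left_cancel h⟩

private lemma sigma_fin_ext {m : ℕ} {g : Fin m → ℕ} {p q : (j : Fin m) × Fin (g j)}
    (h1 : (p.1 : ℕ) = (q.1 : ℕ)) (h2 : (p.2 : ℕ) = (q.2 : ℕ)) : p = q := by
  obtain ⟨p1, p2⟩ := p
  obtain ⟨q1, q2⟩ := q
  dsimp only at h1 h2
  have h1' : p1 = q1 := Fin.val_injective h1
  subst h1'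
  rw [Fin.val_injective h2]

private lemma sum_range_eq_of_vanish {M : Type*} [AddCommMonoid M] (g : ℕ → M) (m a b : ℕ)
    (hma : m ≤ a) (hmb : m ≤ b) (h : ∀ c, m ≤ c → g c = 0) :
    ∑ c ∈ Finset.range a, g c = ∑ c ∈ Finset.range b, g c := by
  rw [← Finset.sum_subset (Finset.range_subset_range.mpr hma)
      (fun x _ hx => h x (Nat.le_of_not_lt (by simpa using hx))),
    ← Finset.sum_subset (Finset.range_subset_range.mpr hmb)
      (fun x _ hx => h x (Nat.le_of_not_lt (by simpa using hx)))]

/-- Extension of a square matrix on `Fin m` to all of `ℕ × ℕ`, by the identity. -/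
noncomputable def uExt {m : ℕ} (u : Matrix (Fin m) (Fin m) ℂ) (a b : ℕ) : ℂ :=
  if h : a < m ∧ b < m then u ⟨a, h.1⟩ ⟨b, h.2⟩ else if a = b then 1 else 0

lemma uExt_pos {m : ℕ} (u : Matrix (Fin m) (Fin m) ℂ) {a b : ℕ} (ha : a < m) (hb : b < m) :
    uExt u a b = u ⟨a, ha⟩ ⟨b, hb⟩ := dif_pos ⟨ha, hb⟩

lemma uExt_diag {m : ℕ} {u : Matrix (Fin m) (Fin m) ℂ} (hu : IsUpperUni u) (a : ℕ) :
    uExt u a a = 1 := by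
  unfold uExt
  split
  · exact hu.1 _
  · rw [if_pos rfl]

lemma uExt_eq_zero {m : ℕ} {u : Matrix (Fin m) (Fin m) ℂ} (hu : IsUpperUni u) {a b : ℕ}
    (h : b < a) : uExt u a b = 0 := by
  unfold uExt
  split
  · next hh => exact hu.2 ⟨a, hh.1⟩ ⟨b, hh.2⟩ h
  · rw [if_neg (by omega)]

lemma uExt_eq_zero' {m : ℕ} (u : Matrix (Fin m) (Fin m) ℂ) {a b : ℕ}
    (h : ¬(a < m ∧ b < m)) (hne : a ≠ b) : uExt u a b = 0 := by
  unfold uExt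
  rw [dif_neg h, if_neg hne]

lemma xvar_pos {n k l : ℕ} {a b : ℕ} (ha : a < n) (hb : b < k) :
    xvar n k l a b = X (⟨a, ha⟩, ⟨b, by omega⟩) := dif_pos ⟨ha, hb⟩

lemma xvar_zero {n k l : ℕ} {a b : ℕ} (h : ¬(a < n ∧ b < k)) :
    xvar n k l a b = 0 := dif_neg h

lemma yvar_pos {n k l : ℕ} {a b : ℕ} (ha : a < n) (hb : b < l) :
    yvar n k l a b = X (⟨a, ha⟩, ⟨k + b, by omega⟩) := dif_pos ⟨ha, hb⟩

lemma yvar_zero {n k l : ℕ} {a b : ℕ} (h : ¬(a < n ∧ b < l)) :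
    yvar n k l a b = 0 := dif_neg h

lemma leftSub_C {n K : ℕ} (g : Matrix (Fin n) (Fin n) ℂ) (a : ℂ) :
    leftSub n K g (MvPolynomial.C a) = MvPolynomial.C a := by
  simp [leftSub, MvPolynomial.aeval_C, MvPolynomial.algebraMap_eq]

lemma rightSub_C {n K : ℕ} (g : Matrix (Fin K) (Fin K) ℂ) (a : ℂ) :
    rightSub n K g (MvPolynomial.C a) = MvPolynomial.C a := by
  simp [rightSub, MvPolynomial.aeval_C, MvPolynomial.algebraMap_eq]

lemma leftSub_xvar {n k l : ℕ} (u : Matrix (Fin n) (Fin n) ℂ) (a b : ℕ) :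
    leftSub n (k + l) u (xvar n k l a b)
      = ∑ c ∈ Finset.range n, MvPolynomial.C (uExt u c a) * xvar n k l c b := by
  by_cases ha : a < n
  · by_cases hb : b < k
    · rw [xvar_pos ha hb, leftSub, aeval_X,
        ← Fin.sum_univ_eq_sum_range (fun c => MvPolynomial.C (uExt u c a) * xvar n k l c b) n]
      refine Finset.sum_congr rfl fun c _ => ?_
      rw [uExt_pos u c.2 ha, xvar_pos c.2 hb]
    · rw [xvar_zero (fun h => hb h.2), map_zero]
      exact (Finset.sum_eq_zero fun c _ => by
        rw [xvar_zero (fun h => hb h.2), mul_zero]).symm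
  · rw [xvar_zero (fun h => ha h.1), map_zero]
    refine (Finset.sum_eq_zero fun c hc => ?_).symm
    rw [uExt_eq_zero' u (fun h => ha h.2)
      (fun hca => ha (hca ▸ Finset.mem_range.mp hc)), MvPolynomial.C_0, zero_mul]

lemma leftSub_yvar {n k l : ℕ} (u : Matrix (Fin n) (Fin n) ℂ) (a b : ℕ) :
    leftSub n (k + l) u (yvar n k l a b)
      = ∑ c ∈ Finset.range n, MvPolynomial.C (uExt u c a) * yvar n k l c b := by
  by_cases ha : a < n
  · by_cases hb : b < l
    · rw [yvar_pos ha hb, leftSub, aeval_X,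
        ← Fin.sum_univ_eq_sum_range (fun c => MvPolynomial.C (uExt u c a) * yvar n k l c b) n]
      refine Finset.sum_congr rfl fun c _ => ?_
      rw [uExt_pos u c.2 ha, yvar_pos c.2 hb]
    · rw [yvar_zero (fun h => hb h.2), map_zero]
      exact (Finset.sum_eq_zero fun c _ => by
        rw [yvar_zero (fun h => hb h.2), mul_zero]).symm
  · rw [yvar_zero (fun h => ha h.1), map_zero]
    refine (Finset.sum_eq_zero fun c hc => ?_).symm
    rw [uExt_eq_zero' u (fun h => ha h.2)
      (fun hca => ha (hca ▸ Finset.mem_range.mp hc)), MvPolynomial.C_0, zero_mul]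

lemma blockDiag_cast_x {k l : ℕ} (u1 : Matrix (Fin k) (Fin k) ℂ)
    (u2 : Matrix (Fin l) (Fin l) ℂ) (c : Fin k) {b : ℕ} (hb : b < k) (hb2 : b < k + l) :
    blockDiag k l u1 u2 (Fin.castAdd l c) ⟨b, hb2⟩ = u1 c ⟨b, hb⟩ := by
  have h : (⟨b, hb2⟩ : Fin (k + l)) = Fin.castAdd l ⟨b, hb⟩ := rfl
  rw [h]
  unfold blockDiag
  rw [Matrix.submatrix_apply, finSumFinEquiv_symm_apply_castAdd,
    finSumFinEquiv_symm_apply_castAdd, Matrix.fromBlocks_apply₁₁]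

lemma blockDiag_nat_x {k l : ℕ} (u1 : Matrix (Fin k) (Fin k) ℂ)
    (u2 : Matrix (Fin l) (Fin l) ℂ) (c : Fin l) {b : ℕ} (hb : b < k) (hb2 : b < k + l) :
    blockDiag k l u1 u2 (Fin.natAdd k c) ⟨b, hb2⟩ = 0 := by
  have h : (⟨b, hb2⟩ : Fin (k + l)) = Fin.castAdd l ⟨b, hb⟩ := rfl
  rw [h]
  unfold blockDiag
  rw [Matrix.submatrix_apply, finSumFinEquiv_symm_apply_natAdd,
    finSumFinEquiv_symm_apply_castAdd, Matrix.fromBlocks_apply₂₁, Matrix.zero_apply]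

lemma blockDiag_cast_y {k l : ℕ} (u1 : Matrix (Fin k) (Fin k) ℂ)
    (u2 : Matrix (Fin l) (Fin l) ℂ) (c : Fin k) {b : ℕ} (hb : b < l) (hb2 : k + b < k + l) :
    blockDiag k l u1 u2 (Fin.castAdd l c) ⟨k + b, hb2⟩ = 0 := by
  have h : (⟨k + b, hb2⟩ : Fin (k + l)) = Fin.natAdd k ⟨b, hb⟩ := rfl
  rw [h]
  unfold blockDiag
  rw [Matrix.submatrix_apply, finSumFinEquiv_symm_apply_castAdd,
    finSumFinEquiv_symm_apply_natAdd, Matrix.fromBlocks_apply₁₂, Matrix.zero_apply]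

lemma blockDiag_nat_y {k l : ℕ} (u1 : Matrix (Fin k) (Fin k) ℂ)
    (u2 : Matrix (Fin l) (Fin l) ℂ) (c : Fin l) {b : ℕ} (hb : b < l) (hb2 : k + b < k + l) :
    blockDiag k l u1 u2 (Fin.natAdd k c) ⟨k + b, hb2⟩ = u2 c ⟨b, hb⟩ := by
  have h : (⟨k + b, hb2⟩ : Fin (k + l)) = Fin.natAdd k ⟨b, hb⟩ := rfl
  rw [h]
  unfold blockDiag
  rw [Matrix.submatrix_apply, finSumFinEquiv_symm_apply_natAdd,
    finSumFinEquiv_symm_apply_natAdd, Matrix.fromBlocks_apply₂₂]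

lemma rightSub_xvar {n k l : ℕ} (u1 : Matrix (Fin k) (Fin k) ℂ)
    (u2 : Matrix (Fin l) (Fin l) ℂ) (a b : ℕ) :
    rightSub n (k + l) (blockDiag k l u1 u2) (xvar n k l a b)
      = ∑ c ∈ Finset.range k, MvPolynomial.C (uExt u1 c b) * xvar n k l a c := by
  by_cases hb : b < k
  · by_cases ha : a < n
    · rw [xvar_pos ha hb, rightSub, aeval_X, Fin.sum_univ_add]
      have h2 : ∀ c : Fin l,
          MvPolynomial.C (blockDiag k l u1 u2 (Fin.natAdd k c) ⟨b, by omega⟩) *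
            (X ((⟨a, ha⟩, Fin.natAdd k c)) : PolyRing n (k + l)) = 0 := fun c => by
        rw [blockDiag_nat_x u1 u2 c hb, MvPolynomial.C_0, zero_mul]
      rw [Finset.sum_congr rfl fun c _ => h2 c, Finset.sum_const_zero, add_zero,
        ← Fin.sum_univ_eq_sum_range (fun c => MvPolynomial.C (uExt u1 c b) * xvar n k l a c) k]
      refine Finset.sum_congr rfl fun c _ => ?_
      rw [blockDiag_cast_x u1 u2 c hb, uExt_pos u1 c.2 hb, xvar_pos ha c.2]
      rfl
    · rw [xvar_zero (fun h => ha h.1), map_zero]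
      exact (Finset.sum_eq_zero fun c _ => by
        rw [xvar_zero (fun h => ha h.1), mul_zero]).symm
  · rw [xvar_zero (fun h => hb h.2), map_zero]
    refine (Finset.sum_eq_zero fun c hc => ?_).symm
    rw [uExt_eq_zero' u1 (fun h => hb h.2)
      (fun hcb => hb (hcb ▸ Finset.mem_range.mp hc)), MvPolynomial.C_0, zero_mul]

lemma rightSub_yvar {n k l : ℕ} (u1 : Matrix (Fin k) (Fin k) ℂ)
    (u2 : Matrix (Fin l) (Fin l) ℂ) (a b : ℕ) :
    rightSub n (k + l) (blockDiag k l u1 u2) (yvar n k l a b)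
      = ∑ c ∈ Finset.range l, MvPolynomial.C (uExt u2 c b) * yvar n k l a c := by
  by_cases hb : b < l
  · by_cases ha : a < n
    · rw [yvar_pos ha hb, rightSub, aeval_X, Fin.sum_univ_add]
      have h2 : ∀ c : Fin k,
          MvPolynomial.C (blockDiag k l u1 u2 (Fin.castAdd l c) ⟨k + b, by omega⟩) *
            (X ((⟨a, ha⟩, Fin.castAdd l c)) : PolyRing n (k + l)) = 0 := fun c => by
        rw [blockDiag_cast_y u1 u2 c hb, MvPolynomial.C_0, zero_mul]
      rw [Finset.sum_congr rfl fun c _ => h2 c, Finset.sum_const_zero, zero_add,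
        ← Fin.sum_univ_eq_sum_range (fun c => MvPolynomial.C (uExt u2 c b) * yvar n k l a c) l]
      refine Finset.sum_congr rfl fun c _ => ?_
      rw [blockDiag_nat_y u1 u2 c hb, uExt_pos u2 c.2 hb, yvar_pos ha c.2]
      rfl
    · rw [yvar_zero (fun h => ha h.1), map_zero]
      exact (Finset.sum_eq_zero fun c _ => by
        rw [yvar_zero (fun h => ha h.1), mul_zero]).symm
  · rw [yvar_zero (fun h => hb h.2), map_zero]
    refine (Finset.sum_eq_zero fun c hc => ?_).symm
    rw [uExt_eq_zero' u2 (fun h => hb h.2)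
      (fun hcb => hb (hcb ▸ Finset.mem_range.mp hc)), MvPolynomial.C_0, zero_mul]

section Core

variable (n k l : ℕ) {r s t : ℕ} (d : Fin r → ℕ) (e : Fin s → ℕ) (f : Fin t → ℕ)
  (hsum : (∑ i, d i) + (∑ i, e i) = ∑ j, f j)
  (A : Fin t → Fin r → ℂ) (B : Fin t → Fin s → ℂ)

/-- The generic entry of the matrix `Z̃`, with the row index inside a superrow extended to
an arbitrary natural number. -/
noncomputable def Ent (j : Fin t) (a : ℕ) (q : RowIdx f) : PolyRing n (k + l) :=
  match (colEquiv d e f hsum).symm q with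
  | Sum.inl c => MvPolynomial.C (A j c.1) * xvar n k l a c.2
  | Sum.inr c => MvPolynomial.C (B j c.1) * yvar n k l a c.2

lemma Ent_inl {j : Fin t} {a : ℕ} {q : RowIdx f} {c : (i : Fin r) × Fin (d i)}
    (h : (colEquiv d e f hsum).symm q = Sum.inl c) :
    Ent n k l d e f hsum A B j a q
      = MvPolynomial.C (A j c.1) * xvar n k l a (c.2 : ℕ) := by
  unfold Ent
  rw [h]

lemma Ent_inr {j : Fin t} {a : ℕ} {q : RowIdx f} {c : (i : Fin s) × Fin (e i)}
    (h : (colEquiv d e f hsum).symm q = Sum.inr c) :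
    Ent n k l d e f hsum A B j a q
      = MvPolynomial.C (B j c.1) * yvar n k l a (c.2 : ℕ) := by
  unfold Ent
  rw [h]

lemma delta_eq_det_ent :
    Delta n k l d e f hsum A B
      = (Matrix.of fun p q : RowIdx f => Ent n k l d e f hsum A B p.1 p.2 q).det := rfl

lemma Ent_zero (j : Fin t) (a : ℕ) (q : RowIdx f) (hna : n ≤ a) :
    Ent n k l d e f hsum A B j a q = 0 := by
  rcases h : (colEquiv d e f hsum).symm q with c | c
  · rw [Ent_inl n k l d e f hsum A B h, xvar_zero (fun hh => absurd hh.1 (by omega)), mul_zero]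
  · rw [Ent_inr n k l d e f hsum A B h, yvar_zero (fun hh => absurd hh.1 (by omega)), mul_zero]

lemma Ent_leftSub (u : Matrix (Fin n) (Fin n) ℂ) (j : Fin t) (a : ℕ) (q : RowIdx f) :
    leftSub n (k + l) u (Ent n k l d e f hsum A B j a q)
      = ∑ c ∈ Finset.range n,
          MvPolynomial.C (uExt u c a) * Ent n k l d e f hsum A B j c q := by
  rcases h : (colEquiv d e f hsum).symm q with c | c
  · rw [Ent_inl n k l d e f hsum A B h, _root_.map_mul, leftSub_C, leftSub_xvar, Finset.mul_sum]
    refine Finset.sum_congr rfl fun c' _ => ?_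
    rw [Ent_inl n k l d e f hsum A B h]
    ring
  · rw [Ent_inr n k l d e f hsum A B h, _root_.map_mul, leftSub_C, leftSub_yvar, Finset.mul_sum]
    refine Finset.sum_congr rfl fun c' _ => ?_
    rw [Ent_inr n k l d e f hsum A B h]
    ring

lemma leftSub_delta (u : Matrix (Fin n) (Fin n) ℂ) (hu : IsUpperUni u) :
    leftSub n (k + l) u (Delta n k l d e f hsum A B) = Delta n k l d e f hsum A B := by
  classical
  set Bd : ℕ := (∑ j, f j) + 1 with hBd
  have hlt : ∀ p : RowIdx f, (p.2 : ℕ) < Bd := fun p =>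
    lt_of_lt_of_le p.2.2 (le_trans
      (Finset.single_le_sum (f := f) (fun i _ => Nat.zero_le _) (Finset.mem_univ p.1))
      (Nat.le_succ _))
  have hULdet :
      (Matrix.of fun p q : RowIdx f =>
        if p.1 = q.1 then MvPolynomial.C (uExt u (q.2 : ℕ) (p.2 : ℕ)) else 0).det
        = (1 : PolyRing n (k + l)) := by
    rw [← Matrix.det_transpose]
    apply det_one_aux _ (fun p : RowIdx f => Bd * (p.1 : ℕ) + (p.2 : ℕ))
    · intro p q hpq
      obtain ⟨h1, h2⟩ := key_aux (Nat.succ_pos _) (hlt p) (hlt q) hpq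
      exact sigma_fin_ext h1 h2
    · intro p q hk
      rw [Matrix.transpose_apply, Matrix.of_apply]
      by_cases hj : q.1 = p.1
      · rw [if_pos hj]
        have hv : (q.1 : ℕ) = (p.1 : ℕ) := congrArg Fin.val hj
        rw [hv] at hk
        rw [uExt_eq_zero hu (Nat.lt_of_add_lt_add_left hk), MvPolynomial.C_0]
      · rw [if_neg hj]
    · intro p
      rw [Matrix.transpose_apply, Matrix.of_apply, if_pos rfl, uExt_diag hu,
        MvPolynomial.C_1]
  have hmap : (Matrix.of fun p q : RowIdx f => Ent n k l d e f hsum A B p.1 p.2 q).map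
        (leftSub n (k + l) u)
      = (Matrix.of fun p q : RowIdx f =>
          if p.1 = q.1 then MvPolynomial.C (uExt u (q.2 : ℕ) (p.2 : ℕ)) else 0)
        * Matrix.of fun p q : RowIdx f => Ent n k l d e f hsum A B p.1 p.2 q := by
    apply Matrix.ext
    intro p q
    simp only [Matrix.map_apply, Matrix.of_apply, Matrix.mul_apply]
    rw [Ent_leftSub n k l d e f hsum A B u p.1 p.2 q]
    have e1 : ∑ x : RowIdx f,
        (if p.1 = x.1 then MvPolynomial.C (uExt u (x.2 : ℕ) (p.2 : ℕ)) else 0)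
          * Ent n k l d e f hsum A B x.1 x.2 q
        = ∑ j' : Fin t, ∑ i' : Fin (f j'),
            (if p.1 = j' then MvPolynomial.C (uExt u (i' : ℕ) (p.2 : ℕ)) else 0)
              * Ent n k l d e f hsum A B j' i' q := by
      rw [← Finset.univ_sigma_univ, Finset.sum_sigma]
    have e2 : (∑ j' : Fin t, ∑ i' : Fin (f j'),
          (if p.1 = j' then MvPolynomial.C (uExt u (i' : ℕ) (p.2 : ℕ)) else 0)
            * Ent n k l d e f hsum A B j' i' q)
        = ∑ i' : Fin (f p.1),
            MvPolynomial.C (uExt u (i' : ℕ) (p.2 : ℕ)) * Ent n k l d e f hsum A B p.1 i' q := by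
      rw [Finset.sum_eq_single_of_mem p.1 (Finset.mem_univ _)
        (fun j' _ hne => Finset.sum_eq_zero fun i' _ => by
          rw [if_neg (fun hh => hne hh.symm), zero_mul])]
      exact Finset.sum_congr rfl fun i' _ => by rw [if_pos rfl]
    have e3 : (∑ i' : Fin (f p.1),
          MvPolynomial.C (uExt u (i' : ℕ) (p.2 : ℕ)) * Ent n k l d e f hsum A B p.1 i' q)
        = ∑ c ∈ Finset.range (f p.1),
            MvPolynomial.C (uExt u c (p.2 : ℕ)) * Ent n k l d e f hsum A B p.1 c q :=
      Fin.sum_univ_eq_sum_range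
        (fun c => MvPolynomial.C (uExt u c (p.2 : ℕ)) * Ent n k l d e f hsum A B p.1 c q)
        (f p.1)
    rw [e1, e2, e3]
    refine sum_range_eq_of_vanish _ (min ((p.2 : ℕ) + 1) n) n (f p.1)
      (min_le_right _ _) (le_trans (min_le_left _ _) p.2.2) fun c hc => ?_
    by_cases hcn : n ≤ c
    · rw [Ent_zero n k l d e f hsum A B p.1 c q hcn, mul_zero]
    · have hlt2 : (p.2 : ℕ) < c := by omega
      rw [uExt_eq_zero hu hlt2, MvPolynomial.C_0, zero_mul]
  rw [delta_eq_det_ent n k l d e f hsum A B, AlgHom.map_det, AlgHom.mapMatrix_apply,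
    hmap, Matrix.det_mul, hULdet, one_mul]

lemma rightSub_delta (u1 : Matrix (Fin k) (Fin k) ℂ) (u2 : Matrix (Fin l) (Fin l) ℂ)
    (hu1 : IsUpperUni u1) (hu2 : IsUpperUni u2) :
    rightSub n (k + l) (blockDiag k l u1 u2) (Delta n k l d e f hsum A B)
      = Delta n k l d e f hsum A B := by
  classical
  set φ := colEquiv d e f hsum with hφ
  set N : Matrix (((i : Fin r) × Fin (d i)) ⊕ ((i : Fin s) × Fin (e i)))
      (((i : Fin r) × Fin (d i)) ⊕ ((i : Fin s) × Fin (e i))) (PolyRing n (k + l)) :=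
    (Matrix.of fun p q : RowIdx f => Ent n k l d e f hsum A B p.1 p.2 q).submatrix φ φ
    with hN
  have hNinl : ∀ p (c : (i : Fin r) × Fin (d i)),
      N p (Sum.inl c) = MvPolynomial.C (A (φ p).1 c.1) *
        xvar n k l ((φ p).2 : ℕ) (c.2 : ℕ) := fun p c =>
    Ent_inl n k l d e f hsum A B (Equiv.symm_apply_apply φ (Sum.inl c))
  have hNinr : ∀ p (c : (i : Fin s) × Fin (e i)),
      N p (Sum.inr c) = MvPolynomial.C (B (φ p).1 c.1) *
        yvar n k l ((φ p).2 : ℕ) (c.2 : ℕ) := fun p c =>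
    Ent_inr n k l d e f hsum A B (Equiv.symm_apply_apply φ (Sum.inr c))
  set V : Matrix (((i : Fin r) × Fin (d i)) ⊕ ((i : Fin s) × Fin (e i)))
      (((i : Fin r) × Fin (d i)) ⊕ ((i : Fin s) × Fin (e i))) (PolyRing n (k + l)) :=
    Matrix.of fun q q' =>
      match q, q' with
      | Sum.inl x, Sum.inl y =>
          if x.1 = y.1 then MvPolynomial.C (uExt u1 (x.2 : ℕ) (y.2 : ℕ)) else 0
      | Sum.inr x, Sum.inr y =>
          if x.1 = y.1 then MvPolynomial.C (uExt u2 (x.2 : ℕ) (y.2 : ℕ)) else 0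
      | _, _ => 0
    with hV
  have hVll : ∀ (x : (i : Fin r) × Fin (d i)) (y : (i : Fin r) × Fin (d i)),
      V (Sum.inl x) (Sum.inl y)
        = if x.1 = y.1 then MvPolynomial.C (uExt u1 (x.2 : ℕ) (y.2 : ℕ)) else 0 :=
    fun x y => by rw [hV]; rfl
  have hVrr : ∀ (x : (i : Fin s) × Fin (e i)) (y : (i : Fin s) × Fin (e i)),
      V (Sum.inr x) (Sum.inr y)
        = if x.1 = y.1 then MvPolynomial.C (uExt u2 (x.2 : ℕ) (y.2 : ℕ)) else 0 :=
    fun x y => by rw [hV]; rfl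
  have hVlr : ∀ (x : (i : Fin r) × Fin (d i)) (y : (i : Fin s) × Fin (e i)),
      V (Sum.inl x) (Sum.inr y) = 0 := fun x y => by rw [hV]; rfl
  have hVrl : ∀ (x : (i : Fin s) × Fin (e i)) (y : (i : Fin r) × Fin (d i)),
      V (Sum.inr x) (Sum.inl y) = 0 := fun x y => by rw [hV]; rfl
  set B1 : ℕ := (∑ i, d i) + 1 with hB1
  set B2 : ℕ := (∑ i, e i) + 1 with hB2
  have hx2 : ∀ x : (i : Fin r) × Fin (d i), (x.2 : ℕ) < B1 := fun x =>
    lt_of_lt_of_le x.2.2 (le_trans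
      (Finset.single_le_sum (f := d) (fun i _ => Nat.zero_le _) (Finset.mem_univ x.1))
      (Nat.le_succ _))
  have hy2 : ∀ x : (i : Fin s) × Fin (e i), (x.2 : ℕ) < B2 := fun x =>
    lt_of_lt_of_le x.2.2 (le_trans
      (Finset.single_le_sum (f := e) (fun i _ => Nat.zero_le _) (Finset.mem_univ x.1))
      (Nat.le_succ _))
  have hxk : ∀ x : (i : Fin r) × Fin (d i), B1 * (x.1 : ℕ) + (x.2 : ℕ) < B1 * r := fun x =>
    calc B1 * (x.1 : ℕ) + (x.2 : ℕ) < B1 * (x.1 : ℕ) + B1 := Nat.add_lt_add_left (hx2 x) _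
      _ = B1 * ((x.1 : ℕ) + 1) := by ring
      _ ≤ B1 * r := Nat.mul_le_mul le_rfl x.1.2
  have hVdet : V.det = 1 := by
    apply det_one_aux _ (Sum.elim (fun x => B1 * (x.1 : ℕ) + (x.2 : ℕ))
      (fun x => B1 * r + (B2 * (x.1 : ℕ) + (x.2 : ℕ))))
    · intro q q' h
      rcases q with x | x <;> rcases q' with y | y
      · simp only [Sum.elim_inl] at h
        obtain ⟨h1, h2⟩ := key_aux (Nat.succ_pos _) (hx2 x) (hx2 y) h
        exact congrArg Sum.inl (sigma_fin_ext h1 h2)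
      · simp only [Sum.elim_inl, Sum.elim_inr] at h
        exact absurd h (Nat.ne_of_lt (lt_of_lt_of_le (hxk x) (Nat.le_add_right _ _)))
      · simp only [Sum.elim_inl, Sum.elim_inr] at h
        exact absurd h.symm (Nat.ne_of_lt (lt_of_lt_of_le (hxk y) (Nat.le_add_right _ _)))
      · simp only [Sum.elim_inr] at h
        obtain ⟨h1, h2⟩ := key_aux (Nat.succ_pos _) (hy2 x) (hy2 y)
          (Nat.add_left_cancel h)
        exact congrArg Sum.inr (sigma_fin_ext h1 h2)
    · intro p q hk
      rcases p with x | x <;> rcases q with y | y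
      · rw [hVll x y]
        by_cases hj : x.1 = y.1
        · rw [if_pos hj]
          simp only [Sum.elim_inl] at hk
          have hv : (x.1 : ℕ) = (y.1 : ℕ) := congrArg Fin.val hj
          rw [hv] at hk
          rw [uExt_eq_zero hu1 (Nat.lt_of_add_lt_add_left hk), MvPolynomial.C_0]
        · rw [if_neg hj]
      · exact hVlr x y
      · exact hVrl x y
      · rw [hVrr x y]
        by_cases hj : x.1 = y.1
        · rw [if_pos hj]
          simp only [Sum.elim_inr] at hk
          have hk' := Nat.lt_of_add_lt_add_left hk
          have hv : (x.1 : ℕ) = (y.1 : ℕ) := congrArg Fin.val hj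
          rw [hv] at hk'
          rw [uExt_eq_zero hu2 (Nat.lt_of_add_lt_add_left hk'), MvPolynomial.C_0]
        · rw [if_neg hj]
    · intro p
      rcases p with x | x
      · rw [hVll x x, if_pos rfl, uExt_diag hu1, MvPolynomial.C_1]
      · rw [hVrr x x, if_pos rfl, uExt_diag hu2, MvPolynomial.C_1]
  have hmap : N.map (rightSub n (k + l) (blockDiag k l u1 u2)) = N * V := by
    apply Matrix.ext
    intro p q'
    simp only [Matrix.map_apply, Matrix.mul_apply]
    rcases q' with c | c
    · have hL : rightSub n (k + l) (blockDiag k l u1 u2) (N p (Sum.inl c))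
          = ∑ b ∈ Finset.range k, MvPolynomial.C (A (φ p).1 c.1) *
              MvPolynomial.C (uExt u1 b (c.2 : ℕ)) * xvar n k l ((φ p).2 : ℕ) b := by
        rw [hNinl p c, _root_.map_mul, rightSub_C, rightSub_xvar, Finset.mul_sum]
        exact Finset.sum_congr rfl fun b _ => by ring
      have hR : ∑ x, N p x * V x (Sum.inl c)
          = ∑ b ∈ Finset.range (d c.1), MvPolynomial.C (A (φ p).1 c.1) *
              MvPolynomial.C (uExt u1 b (c.2 : ℕ)) * xvar n k l ((φ p).2 : ℕ) b := by
        have e0 : ∑ x, N p x * V x (Sum.inl c)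
            = (∑ x : (i : Fin r) × Fin (d i), N p (Sum.inl x) * V (Sum.inl x) (Sum.inl c))
              + ∑ x : (i : Fin s) × Fin (e i), N p (Sum.inr x) * V (Sum.inr x) (Sum.inl c) :=
          Fintype.sum_sum_type _
        have e1 : (∑ x : (i : Fin s) × Fin (e i),
            N p (Sum.inr x) * V (Sum.inr x) (Sum.inl c)) = 0 :=
          Finset.sum_eq_zero fun x _ => by rw [hVrl x c, mul_zero]
        have e2 : (∑ x : (i : Fin r) × Fin (d i), N p (Sum.inl x) * V (Sum.inl x) (Sum.inl c))
            = ∑ j' : Fin r, ∑ b : Fin (d j'),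
                N p (Sum.inl ⟨j', b⟩) * V (Sum.inl ⟨j', b⟩) (Sum.inl c) := by
          rw [← Finset.univ_sigma_univ, Finset.sum_sigma]
        have e3 : (∑ j' : Fin r, ∑ b : Fin (d j'),
              N p (Sum.inl ⟨j', b⟩) * V (Sum.inl ⟨j', b⟩) (Sum.inl c))
            = ∑ b : Fin (d c.1), N p (Sum.inl ⟨c.1, b⟩) * V (Sum.inl ⟨c.1, b⟩) (Sum.inl c) :=
          Finset.sum_eq_single_of_mem c.1 (Finset.mem_univ _)
            (fun j' _ hne => Finset.sum_eq_zero fun b _ => by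
              rw [hVll ⟨j', b⟩ c, if_neg hne, mul_zero])
        have e4 : ∀ b : Fin (d c.1),
            N p (Sum.inl ⟨c.1, b⟩) * V (Sum.inl ⟨c.1, b⟩) (Sum.inl c)
              = MvPolynomial.C (A (φ p).1 c.1) * MvPolynomial.C (uExt u1 (b : ℕ) (c.2 : ℕ))
                * xvar n k l ((φ p).2 : ℕ) (b : ℕ) := fun b => by
          rw [hVll ⟨c.1, b⟩ c, if_pos rfl, hNinl p ⟨c.1, b⟩]
          ring
        rw [e0, e1, add_zero, e2, e3, Finset.sum_congr rfl fun b _ => e4 b]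
        exact Fin.sum_univ_eq_sum_range
          (fun b => MvPolynomial.C (A (φ p).1 c.1) *
            MvPolynomial.C (uExt u1 b (c.2 : ℕ)) * xvar n k l ((φ p).2 : ℕ) b) (d c.1)
      rw [hL, hR]
      refine sum_range_eq_of_vanish _ (min ((c.2 : ℕ) + 1) k) k (d c.1)
        (min_le_right _ _) (le_trans (min_le_left _ _) c.2.2) fun b hb => ?_
      by_cases hbk : k ≤ b
      · rw [xvar_zero (fun hh => absurd hh.2 (by omega)), mul_zero]
      · have hlt2 : (c.2 : ℕ) < b := by omega
        rw [uExt_eq_zero hu1 hlt2, MvPolynomial.C_0, mul_zero, zero_mul]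
    · have hL : rightSub n (k + l) (blockDiag k l u1 u2) (N p (Sum.inr c))
          = ∑ b ∈ Finset.range l, MvPolynomial.C (B (φ p).1 c.1) *
              MvPolynomial.C (uExt u2 b (c.2 : ℕ)) * yvar n k l ((φ p).2 : ℕ) b := by
        rw [hNinr p c, _root_.map_mul, rightSub_C, rightSub_yvar, Finset.mul_sum]
        exact Finset.sum_congr rfl fun b _ => by ring
      have hR : ∑ x, N p x * V x (Sum.inr c)
          = ∑ b ∈ Finset.range (e c.1), MvPolynomial.C (B (φ p).1 c.1) *
              MvPolynomial.C (uExt u2 b (c.2 : ℕ)) * yvar n k l ((φ p).2 : ℕ) b := by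
        have e0 : ∑ x, N p x * V x (Sum.inr c)
            = (∑ x : (i : Fin r) × Fin (d i), N p (Sum.inl x) * V (Sum.inl x) (Sum.inr c))
              + ∑ x : (i : Fin s) × Fin (e i), N p (Sum.inr x) * V (Sum.inr x) (Sum.inr c) :=
          Fintype.sum_sum_type _
        have e1 : (∑ x : (i : Fin r) × Fin (d i),
            N p (Sum.inl x) * V (Sum.inl x) (Sum.inr c)) = 0 :=
          Finset.sum_eq_zero fun x _ => by rw [hVlr x c, mul_zero]
        have e2 : (∑ x : (i : Fin s) × Fin (e i), N p (Sum.inr x) * V (Sum.inr x) (Sum.inr c))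
            = ∑ j' : Fin s, ∑ b : Fin (e j'),
                N p (Sum.inr ⟨j', b⟩) * V (Sum.inr ⟨j', b⟩) (Sum.inr c) := by
          rw [← Finset.univ_sigma_univ, Finset.sum_sigma]
        have e3 : (∑ j' : Fin s, ∑ b : Fin (e j'),
              N p (Sum.inr ⟨j', b⟩) * V (Sum.inr ⟨j', b⟩) (Sum.inr c))
            = ∑ b : Fin (e c.1), N p (Sum.inr ⟨c.1, b⟩) * V (Sum.inr ⟨c.1, b⟩) (Sum.inr c) :=
          Finset.sum_eq_single_of_mem c.1 (Finset.mem_univ _)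
            (fun j' _ hne => Finset.sum_eq_zero fun b _ => by
              rw [hVrr ⟨j', b⟩ c, if_neg hne, mul_zero])
        have e4 : ∀ b : Fin (e c.1),
            N p (Sum.inr ⟨c.1, b⟩) * V (Sum.inr ⟨c.1, b⟩) (Sum.inr c)
              = MvPolynomial.C (B (φ p).1 c.1) * MvPolynomial.C (uExt u2 (b : ℕ) (c.2 : ℕ))
                * yvar n k l ((φ p).2 : ℕ) (b : ℕ) := fun b => by
          rw [hVrr ⟨c.1, b⟩ c, if_pos rfl, hNinr p ⟨c.1, b⟩]
          ring
        rw [e0, e1, zero_add, e2, e3, Finset.sum_congr rfl fun b _ => e4 b]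
        exact Fin.sum_univ_eq_sum_range
          (fun b => MvPolynomial.C (B (φ p).1 c.1) *
            MvPolynomial.C (uExt u2 b (c.2 : ℕ)) * yvar n k l ((φ p).2 : ℕ) b) (e c.1)
      rw [hL, hR]
      refine sum_range_eq_of_vanish _ (min ((c.2 : ℕ) + 1) l) l (e c.1)
        (min_le_right _ _) (le_trans (min_le_left _ _) c.2.2) fun b hb => ?_
      by_cases hbl : l ≤ b
      · rw [yvar_zero (fun hh => absurd hh.2 (by omega)), mul_zero]
      · have hlt2 : (c.2 : ℕ) < b := by omega
        rw [uExt_eq_zero hu2 hlt2, MvPolynomial.C_0, mul_zero, zero_mul]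
  have hdet2 : Delta n k l d e f hsum A B = N.det := by
    rw [delta_eq_det_ent n k l d e f hsum A B, hN, Matrix.det_submatrix_equiv_self]
  rw [hdet2, AlgHom.map_det, AlgHom.mapMatrix_apply, hmap, Matrix.det_mul, hVdet, mul_one]

end Core

/-- For any choice of complex coefficient matrices `A ∈ M_{t×r}(ℂ)` and
`B ∈ M_{t×s}(ℂ)`, the polynomial `Δ_{(D,E,F),(A,B)}` is invariant under
`U_n × U_k × U_ℓ`; that is, it is a `GL_n × GL_k × GL_ℓ` highest weight vector and lies
in `TA_{n,k,ℓ}`. -/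
theorem delta_mem_tensorProductAlgebra
    (n k l : ℕ) (hn : 0 < n) (hk : 0 < k) (hl : 0 < l)
    {r s t : ℕ} (hr : r ≤ k) (hs : s ≤ l) (ht : t ≤ min n (k + l))
    (d : Fin r → ℕ) (e : Fin s → ℕ) (f : Fin t → ℕ)
    (hd : Antitone d) (he : Antitone e) (hf : Antitone f)
    (hdpos : ∀ i, 0 < d i) (hepos : ∀ i, 0 < e i) (hfpos : ∀ j, 0 < f j)
    (hsum : (∑ i, d i) + (∑ i, e i) = ∑ j, f j)
    (A : Fin t → Fin r → ℂ) (B : Fin t → Fin s → ℂ) :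
    Delta n k l d e f hsum A B ∈ TA n k l := by
  intro u3 u1 u2 h3 h1 h2
  exact ⟨leftSub_delta n k l d e f hsum A B u3 h3,
    rightSub_delta n k l d e f hsum A B u1 u2 h1 h2⟩

end HTW
end

section
/- Regarded as a polynomial in the indeterminates α_{jk} and β_{jk} (with coefficients that are polynomials in the x_{ab} and y_{ac}), Δ_{(D,E,F),(A,B)} is unchanged under each of the following operations: (i) adding a scalar multiple of the i-th column of A to the h-th column of A, for any i < h; (ii) adding a scalar multiple of the i-th column of B to the h-th column of B, for any i < h; (iii) simultaneously adding a scalar multiple of the i-th row of A to the j-th row of A and the same scalar multiple of the i-th row of B to the j-th row of B, for any i < j. That is, Δ_{(D,E,F),(A,B)} is invariant under Ũ_t × Ũ_r × Ũ_s. -/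
open MvPolynomial Matrix Finset

namespace HTW

/-- The ring of polynomials in the indeterminates `α_{jc}` (left summand) and `β_{jc}`
(right summand) with coefficients in `P(M_{n,k+ℓ})`. -/
abbrev ABRing (n k l t r s : ℕ) :=
  MvPolynomial ((Fin t × Fin r) ⊕ (Fin t × Fin s)) (PolyRing n (k + l))

/-- The polynomial `Δ_{(D,E,F),(A,B)}` with `A`, `B` matrices of indeterminates:
the determinant of the block matrix with blocks `α_{jc}·X_{f_j,d_c}` and
`β_{jc}·Y_{f_j,e_c}`, regarded as a polynomial in the `α_{jc}`, `β_{jc}` with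
coefficients that are polynomials in the `x_{ab}`, `y_{ac}`. -/
noncomputable def DeltaGen (n k l : ℕ) {r s t : ℕ} (d : Fin r → ℕ) (e : Fin s → ℕ)
    (f : Fin t → ℕ) (hsum : (∑ i, d i) + (∑ i, e i) = ∑ j, f j) : ABRing n k l t r s :=
  Matrix.det (Matrix.of fun i j : RowIdx f =>
    match (colEquiv d e f hsum).symm j with
    | Sum.inl c => (X (Sum.inl (i.1, c.1)) : ABRing n k l t r s) *
        MvPolynomial.C (xvar n k l i.2 c.2)
    | Sum.inr c => (X (Sum.inr (i.1, c.1)) : ABRing n k l t r s) *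
        MvPolynomial.C (yvar n k l i.2 c.2))

/-- The substitution adding `η` times the `i0`-th column of `A` to the `h0`-th column:
`α_{j,h0} ↦ α_{j,h0} + η·α_{j,i0}`, all other variables fixed. -/
noncomputable def colOpA (n k l t r s : ℕ) (i0 h0 : Fin r) (η : ℂ) :
    ABRing n k l t r s →ₐ[PolyRing n (k + l)] ABRing n k l t r s :=
  aeval fun v => match v with
    | Sum.inl jc => if jc.2 = h0
        then X (Sum.inl (jc.1, h0)) + algebraMap ℂ _ η * X (Sum.inl (jc.1, i0))
        else X (Sum.inl jc)
    | Sum.inr jc => X (Sum.inr jc)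

/-- The substitution adding `η` times the `i0`-th column of `B` to the `h0`-th column:
`β_{j,h0} ↦ β_{j,h0} + η·β_{j,i0}`, all other variables fixed. -/
noncomputable def colOpB (n k l t r s : ℕ) (i0 h0 : Fin s) (η : ℂ) :
    ABRing n k l t r s →ₐ[PolyRing n (k + l)] ABRing n k l t r s :=
  aeval fun v => match v with
    | Sum.inl jc => X (Sum.inl jc)
    | Sum.inr jc => if jc.2 = h0
        then X (Sum.inr (jc.1, h0)) + algebraMap ℂ _ η * X (Sum.inr (jc.1, i0))
        else X (Sum.inr jc)

/-- The substitution simultaneously adding `η` times the `i0`-th row of `A` to the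
`j0`-th row of `A` and `η` times the `i0`-th row of `B` to the `j0`-th row of `B`. -/
noncomputable def rowOpAB (n k l t r s : ℕ) (i0 j0 : Fin t) (η : ℂ) :
    ABRing n k l t r s →ₐ[PolyRing n (k + l)] ABRing n k l t r s :=
  aeval fun v => match v with
    | Sum.inl jc => if jc.1 = j0
        then X (Sum.inl (j0, jc.2)) + algebraMap ℂ _ η * X (Sum.inl (i0, jc.2))
        else X (Sum.inl jc)
    | Sum.inr jc => if jc.1 = j0
        then X (Sum.inr (j0, jc.2)) + algebraMap ℂ _ η * X (Sum.inr (i0, jc.2))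
        else X (Sum.inr jc)


private theorem det_aux_row {R ι : Type*} [CommRing R] [Fintype ι] [DecidableEq ι]
    (A : Matrix ι ι R) (σ : ι → ι) (c : R) (T : Finset ι)
    (hT : ∀ i ∈ T, σ i ∉ T) (hne : ∀ i ∈ T, σ i ≠ i) :
    (Matrix.of fun i j => A i j + if i ∈ T then c * A (σ i) j else 0).det = A.det := by
  classical
  induction T using Finset.induction_on with
  | empty => simp; rfl
  | @insert a s ha ih =>
    have hs : ∀ i ∈ s, σ i ∉ s := fun i hi h =>
      hT i (Finset.mem_insert_of_mem hi) (Finset.mem_insert_of_mem h)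
    have hnes : ∀ i ∈ s, σ i ≠ i := fun i hi => hne i (Finset.mem_insert_of_mem hi)
    set B : Matrix ι ι R := Matrix.of fun i j => A i j + if i ∈ s then c * A (σ i) j else 0
      with hB
    have hσa : σ a ∉ insert a s := hT a (Finset.mem_insert_self a s)
    have hBa : B a = A a := by
      funext j; simp [hB, ha]
    have hBσa : B (σ a) = A (σ a) := by
      funext j
      have : σ a ∉ s := fun h => hσa (Finset.mem_insert_of_mem h)
      simp [hB, this]
    have heq : (Matrix.of fun i j => A i j + if i ∈ insert a s then c * A (σ i) j else 0)
        = B.updateRow a (B a + c • B (σ a)) := by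
      funext i j
      by_cases hia : i = a
      · subst hia
        simp [Matrix.updateRow_self, hBa, hBσa, Finset.mem_insert_self, mul_comm]
      · simp [Matrix.updateRow_ne hia, hB, Finset.mem_insert, hia]
    have hane : a ≠ σ a := fun h => (hne a (Finset.mem_insert_self a s)) h.symm
    rw [heq, Matrix.det_updateRow_add_smul_self B hane c, ih hs hnes]

private theorem det_aux_col {R ι : Type*} [CommRing R] [Fintype ι] [DecidableEq ι]
    (A : Matrix ι ι R) (σ : ι → ι) (c : R) (T : Finset ι)
    (hT : ∀ i ∈ T, σ i ∉ T) (hne : ∀ i ∈ T, σ i ≠ i) :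
    (Matrix.of fun i j => A i j + if j ∈ T then c * A i (σ j) else 0).det = A.det := by
  rw [← Matrix.det_transpose A, ← det_aux_row Aᵀ σ c T hT hne,
    ← Matrix.det_transpose (Matrix.of fun i j => A i j + if j ∈ T then c * A i (σ j) else 0)]
  congr 1

/-- Regarded as a polynomial in the indeterminates `α_{jc}`, `β_{jc}`,
the polynomial `Δ_{(D,E,F),(A,B)}` is unchanged under (i) adding a scalar multiple of
an earlier column of `A` to a later column of `A`; (ii) the same for `B`; (iii)
simultaneously adding a scalar multiple of an earlier row of `A` (resp. `B`) to a
later row of `A` (resp. `B`); that is, it is invariant under `Ũ_t × Ũ_r × Ũ_s`. -/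
theorem deltaGen_unipotent_invariance
    (n k l : ℕ) (hn : 0 < n) (hk : 0 < k) (hl : 0 < l)
    {r s t : ℕ} (hr : r ≤ k) (hs : s ≤ l) (ht : t ≤ min n (k + l))
    (d : Fin r → ℕ) (e : Fin s → ℕ) (f : Fin t → ℕ)
    (hd : Antitone d) (he : Antitone e) (hf : Antitone f)
    (hdpos : ∀ i, 0 < d i) (hepos : ∀ i, 0 < e i) (hfpos : ∀ j, 0 < f j)
    (hsum : (∑ i, d i) + (∑ i, e i) = ∑ j, f j) :
    (∀ (i0 h0 : Fin r), i0 < h0 → ∀ η : ℂ,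
      colOpA n k l t r s i0 h0 η (DeltaGen n k l d e f hsum) =
        DeltaGen n k l d e f hsum) ∧
    (∀ (i0 h0 : Fin s), i0 < h0 → ∀ η : ℂ,
      colOpB n k l t r s i0 h0 η (DeltaGen n k l d e f hsum) =
        DeltaGen n k l d e f hsum) ∧
    (∀ (i0 j0 : Fin t), i0 < j0 → ∀ η : ℂ,
      rowOpAB n k l t r s i0 j0 η (DeltaGen n k l d e f hsum) =
        DeltaGen n k l d e f hsum) := by
  classical
  refine ⟨?_, ?_, ?_⟩
  · -- column operation on A
    intro i0 h0 hi η
    set E := colEquiv d e f hsum with hEdef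
    set M : Matrix (RowIdx f) (RowIdx f) (ABRing n k l t r s) :=
      Matrix.of (fun i j : RowIdx f =>
        match E.symm j with
        | Sum.inl c => (X (Sum.inl (i.1, c.1)) : ABRing n k l t r s) *
            MvPolynomial.C (xvar n k l i.2 c.2)
        | Sum.inr c => (X (Sum.inr (i.1, c.1)) : ABRing n k l t r s) *
            MvPolynomial.C (yvar n k l i.2 c.2)) with hM
    have hDG : DeltaGen n k l d e f hsum = M.det := rfl
    have hdd : d h0 ≤ d i0 := hd hi.le
    set g : ((i : Fin r) × Fin (d i)) ⊕ ((i : Fin s) × Fin (e i)) →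
        ((i : Fin r) × Fin (d i)) ⊕ ((i : Fin s) × Fin (e i)) := fun x =>
      match x with
      | Sum.inl c => if h : c.1 = h0 then Sum.inl ⟨i0, ⟨(c.2 : ℕ), by
          have h2 := c.2.2; have h3 : d c.fst = d h0 := by rw [h]
          omega⟩⟩ else Sum.inl c
      | Sum.inr c => Sum.inr c with hg
    set σ : RowIdx f → RowIdx f := fun j => E (g (E.symm j)) with hσ
    set T : Finset (RowIdx f) := Finset.univ.filter fun j =>
      ∃ c : (i : Fin r) × Fin (d i), E.symm j = Sum.inl c ∧ c.1 = h0 with hT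
    have hmemT : ∀ j, j ∈ T ↔ ∃ c, E.symm j = Sum.inl c ∧ c.1 = h0 := by
      intro j; simp [hT]
    have hTσ : ∀ j ∈ T, σ j ∉ T := by
      intro j hj hj2
      obtain ⟨c, hc, hch⟩ := (hmemT j).1 hj
      obtain ⟨c', hc', hch'⟩ := (hmemT (σ j)).1 hj2
      rw [hσ] at hc'
      simp only [Equiv.symm_apply_apply] at hc'
      rw [hc] at hc'
      rw [hg] at hc'
      simp only [dif_pos hch] at hc'
      rw [Sum.inl.injEq] at hc'
      have h5 := congrArg Sigma.fst hc'
      exact hi.ne (show i0 = h0 from h5.trans hch')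
    have hTne : ∀ j ∈ T, σ j ≠ j := by
      intro j hj hj2
      obtain ⟨c, hc, hch⟩ := (hmemT j).1 hj
      have := congrArg E.symm hj2
      rw [hσ] at this
      simp only [Equiv.symm_apply_apply] at this
      rw [hc] at this
      rw [hg] at this
      simp only [dif_pos hch] at this
      rw [Sum.inl.injEq] at this
      have h5 := congrArg Sigma.fst this
      exact hi.ne (show i0 = h0 from h5.trans hch)
    have key : (colOpA n k l t r s i0 h0 η).mapMatrix M =
        Matrix.of fun i j => M i j +
          if j ∈ T then (algebraMap ℂ (ABRing n k l t r s) η) * M i (σ j) else 0 := by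
      funext i j
      simp only [AlgHom.mapMatrix_apply, Matrix.map_apply, Matrix.of_apply, hM]
      have hσs : E.symm (σ j) = g (E.symm j) := by rw [hσ]; simp
      rcases hE : E.symm j with c | c
      · rw [hE] at hσs
        by_cases hch : c.1 = h0
        · have hmem : j ∈ T := (hmemT j).2 ⟨c, hE, hch⟩
          rw [hg] at hσs
          simp only [dif_pos hch] at hσs
          simp only [hσs, if_pos hmem]
          obtain ⟨c1, c2⟩ := c
          cases hch
          simp [colOpA, MvPolynomial.algebraMap_eq]
          try ring
        · have hmem : j ∉ T := by
            intro h
            obtain ⟨c', hc', hch'⟩ := (hmemT j).1 h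
            rw [hE] at hc'
            cases hc'
            exact hch hch'
          simp only [if_neg hmem, add_zero]
          simp [colOpA, MvPolynomial.algebraMap_eq, hch]
      · have hmem : j ∉ T := by
          intro h
          obtain ⟨c', hc', _⟩ := (hmemT j).1 h
          rw [hE] at hc'
          cases hc'
        simp only [if_neg hmem, add_zero]
        simp [colOpA, MvPolynomial.algebraMap_eq]
    rw [hDG, AlgHom.map_det, key,
      det_aux_col M σ (algebraMap ℂ (ABRing n k l t r s) η) T hTσ hTne]
  · -- column operation on B
    intro i0 h0 hi η
    set E := colEquiv d e f hsum with hEdef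
    set M : Matrix (RowIdx f) (RowIdx f) (ABRing n k l t r s) :=
      Matrix.of (fun i j : RowIdx f =>
        match E.symm j with
        | Sum.inl c => (X (Sum.inl (i.1, c.1)) : ABRing n k l t r s) *
            MvPolynomial.C (xvar n k l i.2 c.2)
        | Sum.inr c => (X (Sum.inr (i.1, c.1)) : ABRing n k l t r s) *
            MvPolynomial.C (yvar n k l i.2 c.2)) with hM
    have hDG : DeltaGen n k l d e f hsum = M.det := rfl
    have hdd : e h0 ≤ e i0 := he hi.le
    set g : ((i : Fin r) × Fin (d i)) ⊕ ((i : Fin s) × Fin (e i)) →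
        ((i : Fin r) × Fin (d i)) ⊕ ((i : Fin s) × Fin (e i)) := fun x =>
      match x with
      | Sum.inl c => Sum.inl c
      | Sum.inr c => if h : c.1 = h0 then Sum.inr ⟨i0, ⟨(c.2 : ℕ), by
          have h2 := c.2.2; have h3 : e c.fst = e h0 := by rw [h]
          omega⟩⟩ else Sum.inr c with hg
    set σ : RowIdx f → RowIdx f := fun j => E (g (E.symm j)) with hσ
    set T : Finset (RowIdx f) := Finset.univ.filter fun j =>
      ∃ c : (i : Fin s) × Fin (e i), E.symm j = Sum.inr c ∧ c.1 = h0 with hT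
    have hmemT : ∀ j, j ∈ T ↔ ∃ c, E.symm j = Sum.inr c ∧ c.1 = h0 := by
      intro j; simp [hT]
    have hTσ : ∀ j ∈ T, σ j ∉ T := by
      intro j hj hj2
      obtain ⟨c, hc, hch⟩ := (hmemT j).1 hj
      obtain ⟨c', hc', hch'⟩ := (hmemT (σ j)).1 hj2
      rw [hσ] at hc'
      simp only [Equiv.symm_apply_apply] at hc'
      rw [hc] at hc'
      rw [hg] at hc'
      simp only [dif_pos hch] at hc'
      rw [Sum.inr.injEq] at hc'
      have h5 := congrArg Sigma.fst hc'
      exact hi.ne (show i0 = h0 from h5.trans hch')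
    have hTne : ∀ j ∈ T, σ j ≠ j := by
      intro j hj hj2
      obtain ⟨c, hc, hch⟩ := (hmemT j).1 hj
      have := congrArg E.symm hj2
      rw [hσ] at this
      simp only [Equiv.symm_apply_apply] at this
      rw [hc] at this
      rw [hg] at this
      simp only [dif_pos hch] at this
      rw [Sum.inr.injEq] at this
      have h5 := congrArg Sigma.fst this
      exact hi.ne (show i0 = h0 from h5.trans hch)
    have key : (colOpB n k l t r s i0 h0 η).mapMatrix M =
        Matrix.of fun i j => M i j +
          if j ∈ T then (algebraMap ℂ (ABRing n k l t r s) η) * M i (σ j) else 0 := by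
      funext i j
      simp only [AlgHom.mapMatrix_apply, Matrix.map_apply, Matrix.of_apply, hM]
      have hσs : E.symm (σ j) = g (E.symm j) := by rw [hσ]; simp
      rcases hE : E.symm j with c | c
      · have hmem : j ∉ T := by
          intro h
          obtain ⟨c', hc', _⟩ := (hmemT j).1 h
          rw [hE] at hc'
          cases hc'
        simp only [if_neg hmem, add_zero]
        simp [colOpB, MvPolynomial.algebraMap_eq]
      · rw [hE] at hσs
        by_cases hch : c.1 = h0
        · have hmem : j ∈ T := (hmemT j).2 ⟨c, hE, hch⟩
          rw [hg] at hσs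
          simp only [dif_pos hch] at hσs
          simp only [hσs, if_pos hmem]
          obtain ⟨c1, c2⟩ := c
          cases hch
          simp [colOpB, MvPolynomial.algebraMap_eq]
          try ring
        · have hmem : j ∉ T := by
            intro h
            obtain ⟨c', hc', hch'⟩ := (hmemT j).1 h
            rw [hE] at hc'
            cases hc'
            exact hch hch'
          simp only [if_neg hmem, add_zero]
          simp [colOpB, MvPolynomial.algebraMap_eq, hch]
    rw [hDG, AlgHom.map_det, key,
      det_aux_col M σ (algebraMap ℂ (ABRing n k l t r s) η) T hTσ hTne]
  · -- simultaneous row operation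
    intro i0 j0 hi η
    set E := colEquiv d e f hsum with hEdef
    set M : Matrix (RowIdx f) (RowIdx f) (ABRing n k l t r s) :=
      Matrix.of (fun i j : RowIdx f =>
        match E.symm j with
        | Sum.inl c => (X (Sum.inl (i.1, c.1)) : ABRing n k l t r s) *
            MvPolynomial.C (xvar n k l i.2 c.2)
        | Sum.inr c => (X (Sum.inr (i.1, c.1)) : ABRing n k l t r s) *
            MvPolynomial.C (yvar n k l i.2 c.2)) with hM
    have hDG : DeltaGen n k l d e f hsum = M.det := rfl
    have hff : f j0 ≤ f i0 := hf hi.le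
    set σ : RowIdx f → RowIdx f := fun i =>
      if h : i.1 = j0 then ⟨i0, ⟨(i.2 : ℕ), by
        have h2 := i.2.2; have h3 : f i.fst = f j0 := by rw [h]
        omega⟩⟩ else i with hσ
    set T : Finset (RowIdx f) := Finset.univ.filter fun i => i.1 = j0 with hT
    have hmemT : ∀ i : RowIdx f, i ∈ T ↔ i.1 = j0 := by intro i; simp [hT]
    have hTσ : ∀ i ∈ T, σ i ∉ T := by
      intro i hii hi2
      have h1 := (hmemT i).1 hii
      have h2 := (hmemT (σ i)).1 hi2
      rw [hσ] at h2
      simp only [dif_pos h1] at h2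
      exact hi.ne h2
    have hTne : ∀ i ∈ T, σ i ≠ i := by
      intro i hii hi2
      have h1 := (hmemT i).1 hii
      have := congrArg Sigma.fst hi2
      rw [hσ] at this
      simp only [dif_pos h1] at this
      exact hi.ne (this.trans h1)
    have key : (rowOpAB n k l t r s i0 j0 η).mapMatrix M =
        Matrix.of fun i j => M i j +
          if i ∈ T then (algebraMap ℂ (ABRing n k l t r s) η) * M (σ i) j else 0 := by
      funext i j
      simp only [AlgHom.mapMatrix_apply, Matrix.map_apply, Matrix.of_apply, hM]
      by_cases hij : i.1 = j0
      · have hmem : i ∈ T := (hmemT i).2 hij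
        simp only [if_pos hmem]
        obtain ⟨i1, i2⟩ := i
        cases hij
        have hd2 : σ ⟨i1, i2⟩ = ⟨i0, ⟨(i2 : ℕ), lt_of_lt_of_le i2.2 hff⟩⟩ := dif_pos rfl
        rw [hd2]
        rcases hE : E.symm j with c | c
        · simp [rowOpAB, MvPolynomial.algebraMap_eq]
          try ring
        · simp [rowOpAB, MvPolynomial.algebraMap_eq]
          try ring
      · have hmem : i ∉ T := fun h => hij ((hmemT i).1 h)
        simp only [if_neg hmem, add_zero]
        rcases hE : E.symm j with c | c
        · simp [rowOpAB, MvPolynomial.algebraMap_eq, hij]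
        · simp [rowOpAB, MvPolynomial.algebraMap_eq, hij]
    rw [hDG, AlgHom.map_det, key,
      det_aux_row M σ (algebraMap ℂ (ABRing n k l t r s) η) T hTσ hTne]


end HTW
end

section
/- Let T be a Littlewood–Richardson tableau (of any skew shape) whose largest entry is ℓ_0. Then for each 1 ≤ h ≤ ℓ_0 there exists a unique cell C_1(h) of T containing the entry h such that no other cell of T containing h lies northeast of it. Moreover, each C_1(h) lies at the right end of its row, and for each 2 ≤ h ≤ ℓ_0 the cell C_1(h−1) lies strictly above and weakly to the right of C_1(h); thus the cells C_1(1), …, C_1(ℓ_0) form a vertical skew strip. -/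
open MvPolynomial Matrix Finset

namespace HTW

/-- A skew diagram is closed under taking "rectangle corners". -/
private lemma rect_mem (T : LRTableau) {a a' j j' : ℕ}
    (h1 : (a, j) ∈ T.supp) (h2 : (a', j') ∈ T.supp) (ha : a ≤ a') (hj : j ≤ j') :
    (a, j') ∈ T.supp := by
  obtain ⟨dd, ff, hdd, hff, -, hmem⟩ := T.skew
  have h1' := (hmem (a, j)).mp h1
  have h2' := (hmem (a', j')).mp h2
  exact (hmem (a, j')).mpr ⟨le_trans (hdd hj) h1'.1, lt_of_le_of_lt ha h2'.2⟩

private lemma pair_mem (T : LRTableau) {c : ℕ × ℕ} (hc : c ∈ T.supp) :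
    (c.1, c.2) ∈ T.supp := by rwa [Prod.mk.eta]

/-- A cell strictly above and weakly left of another has strictly smaller entry. -/
private lemma entry_strict (T : LRTableau) {c c' : ℕ × ℕ} (hc : c ∈ T.supp)
    (hc' : c' ∈ T.supp) (h1 : c.1 < c'.1) (h2 : c.2 ≤ c'.2) :
    T.entry c < T.entry c' := by
  have hx : (c.1, c'.2) ∈ T.supp := rect_mem T (pair_mem T hc) (pair_mem T hc') h1.le h2
  have r1 : T.entry (c.1, c.2) ≤ T.entry (c.1, c'.2) :=
    T.row_weak c.1 c.2 c'.2 h2 (pair_mem T hc) hx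
  have r2 : T.entry (c.1, c'.2) < T.entry (c'.1, c'.2) :=
    T.col_strict c.1 c'.1 c'.2 h1 hx (pair_mem T hc')
  rw [Prod.mk.eta] at r1
  rw [Prod.mk.eta] at r2
  omega

/-- Iterated lattice condition: the number of `m + q`'s in the first `p` rows is at
most the number of `m`'s in the first `p - q` rows. -/
private lemma chain (T : LRTableau) (q : ℕ) : ∀ m p : ℕ, 1 ≤ m →
    (T.supp.filter fun c => c.1 < p ∧ T.entry c = m + q).card ≤
      (T.supp.filter fun c => c.1 + q < p ∧ T.entry c = m).card := by
  induction q with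
  | zero => intro m p _; simp
  | succ q ih =>
    intro m p hm
    have L := T.lattice (m + q + 1) p (by omega)
    have e1 : (T.supp.filter fun c => c.1 + 1 < p ∧ T.entry c = m + q + 1 - 1) =
        T.supp.filter fun c => c.1 < p - 1 ∧ T.entry c = m + q :=
      Finset.filter_congr (fun c _ => by omega)
    rw [e1] at L
    have IH := ih m (p - 1) hm
    have e2 : (T.supp.filter fun c => c.1 + q < p - 1 ∧ T.entry c = m) =
        T.supp.filter fun c => c.1 + (q + 1) < p ∧ T.entry c = m :=
      Finset.filter_congr (fun c _ => by omega)
    rw [e2] at IH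
    exact le_trans L IH

/-- From a cell with entry `m + q` in the first `p` rows one obtains a cell with
entry `m` in the first `p - q` rows. -/
private lemma exists_entry_of_above (T : LRTableau) {m q p : ℕ} (hm : 1 ≤ m)
    {b : ℕ × ℕ} (hb : b ∈ T.supp) (hbe : T.entry b = m + q) (hbp : b.1 < p) :
    ∃ x, x ∈ T.supp ∧ T.entry x = m ∧ x.1 + q < p := by
  have h1 : 0 < (T.supp.filter fun c => c.1 < p ∧ T.entry c = m + q).card :=
    Finset.card_pos.mpr ⟨b, Finset.mem_filter.mpr ⟨hb, hbp, hbe⟩⟩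
  obtain ⟨x, hx⟩ := Finset.card_pos.mp (lt_of_lt_of_le h1 (chain T q m p hm))
  obtain ⟨hx1, hx2, hx3⟩ := Finset.mem_filter.mp hx
  exact ⟨x, hx1, hx3, hx2⟩

/-- Existence of a northeast-maximal cell among the cells with entry `h`. -/
private lemma exists_maximal (T : LRTableau) {h : ℕ}
    (hex : ∃ c, c ∈ T.supp ∧ T.entry c = h) :
    ∃ c, c ∈ T.supp ∧ T.entry c = h ∧
      ∀ c' ∈ T.supp, T.entry c' = h → ¬ NEcell c' c := by
  classical
  obtain ⟨c0, hc0, hc0e⟩ := hex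
  set S := T.supp.filter fun c => T.entry c = h with hS
  have hc0S : c0 ∈ S := Finset.mem_filter.mpr ⟨hc0, hc0e⟩
  obtain ⟨c1, hc1, hmin⟩ := S.exists_min_image (fun c => c.1) ⟨c0, hc0S⟩
  set S2 := S.filter fun c => c.1 = c1.1 with hS2
  have hc1S2 : c1 ∈ S2 := Finset.mem_filter.mpr ⟨hc1, rfl⟩
  obtain ⟨c2, hc2, hmax⟩ := S2.exists_max_image (fun c => c.2) ⟨c1, hc1S2⟩
  obtain ⟨hc2S, hc2r⟩ := Finset.mem_filter.mp hc2
  obtain ⟨hc2supp, hc2e⟩ := Finset.mem_filter.mp hc2S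
  refine ⟨c2, hc2supp, hc2e, ?_⟩
  rintro c' hc' hce ⟨hr, hcol, hne⟩
  have hc'S : c' ∈ S := Finset.mem_filter.mpr ⟨hc', hce⟩
  have h1 : c1.1 ≤ c'.1 := hmin c' hc'S
  have hr2 : c'.1 = c1.1 := by omega
  have hc'S2 : c' ∈ S2 := Finset.mem_filter.mpr ⟨hc'S, hr2⟩
  have h2 : c'.2 ≤ c2.2 := hmax c' hc'S2
  exact hne (Prod.ext_iff.mpr ⟨by omega, by omega⟩)

/-- In an LR tableau `T` with largest entry `ℓ_0`, for each
`1 ≤ h ≤ ℓ_0` there is a unique cell `C_1(h)` containing `h` such that no other cell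
containing `h` lies northeast of it; each such cell lies at the right end of its row,
and `C_1(h-1)` lies strictly above and weakly to the right of `C_1(h)` (so the cells
`C_1(1), …, C_1(ℓ_0)` form a vertical skew strip). -/
theorem exists_unique_northeastmost
    (T : LRTableau) (l0 : ℕ) (hl0 : l0 = T.supp.sup T.entry) :
    (∀ h, 1 ≤ h → h ≤ l0 →
      ∃! c : ℕ × ℕ, c ∈ T.supp ∧ T.entry c = h ∧
        ∀ c' ∈ T.supp, T.entry c' = h → ¬ NEcell c' c) ∧
    (∀ h, 1 ≤ h → h ≤ l0 → ∀ c : ℕ × ℕ,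
      (c ∈ T.supp ∧ T.entry c = h ∧ ∀ c' ∈ T.supp, T.entry c' = h → ¬ NEcell c' c) →
      (c.1, c.2 + 1) ∉ T.supp) ∧
    (∀ h, 2 ≤ h → h ≤ l0 → ∀ c c' : ℕ × ℕ,
      (c ∈ T.supp ∧ T.entry c = h - 1 ∧
        ∀ c'' ∈ T.supp, T.entry c'' = h - 1 → ¬ NEcell c'' c) →
      (c' ∈ T.supp ∧ T.entry c' = h ∧
        ∀ c'' ∈ T.supp, T.entry c'' = h → ¬ NEcell c'' c') →
      c.1 < c'.1 ∧ c'.2 ≤ c.2) := by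
  -- Existence of a cell with entry `h` for every `1 ≤ h ≤ l0`.
  have hexists : ∀ h, 1 ≤ h → h ≤ l0 → ∃ c, c ∈ T.supp ∧ T.entry c = h := by
    intro h hh1 hh2
    have hne : T.supp.Nonempty := by
      rw [Finset.nonempty_iff_ne_empty]
      intro he
      rw [he, Finset.sup_empty] at hl0
      simp only [Nat.bot_eq_zero] at hl0
      omega
    obtain ⟨c0, hc0, hc0e⟩ := Finset.exists_mem_eq_sup T.supp hne T.entry
    obtain ⟨x, hx1, hx2, -⟩ := exists_entry_of_above T (m := h) (q := l0 - h)
      (p := c0.1 + 1) hh1 hc0 (by omega) (by omega)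
    exact ⟨x, hx1, hx2⟩
  -- Uniqueness of the northeast-maximal cell.
  have huniq : ∀ h (c c' : ℕ × ℕ),
      (c ∈ T.supp ∧ T.entry c = h ∧
        ∀ c'' ∈ T.supp, T.entry c'' = h → ¬ NEcell c'' c) →
      (c' ∈ T.supp ∧ T.entry c' = h ∧
        ∀ c'' ∈ T.supp, T.entry c'' = h → ¬ NEcell c'' c') → c = c' := by
    rintro h c c' ⟨hc, hce, hcm⟩ ⟨hc', hce', hcm'⟩
    by_contra hne
    rcases lt_trichotomy c.1 c'.1 with hlt | heq | hgt
    · have h2 : c.2 < c'.2 := by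
        by_contra hh
        exact hcm' c hc hce ⟨hlt.le, by omega, hne⟩
      have := entry_strict T hc hc' hlt h2.le
      omega
    · rcases lt_trichotomy c.2 c'.2 with h2 | h2 | h2
      · exact hcm c' hc' hce' ⟨heq.ge, h2.le, Ne.symm hne⟩
      · exact hne (Prod.ext_iff.mpr ⟨heq, h2⟩)
      · exact hcm' c hc hce ⟨heq.le, h2.le, hne⟩
    · have h2 : c'.2 < c.2 := by
        by_contra hh
        exact hcm c' hc' hce' ⟨hgt.le, by omega, Ne.symm hne⟩
      have := entry_strict T hc' hc hgt h2.le
      omega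
  refine ⟨?_, ?_, ?_⟩
  · -- Part 1: existence and uniqueness.
    intro h hh1 hh2
    obtain ⟨c, hc, hce, hcm⟩ := exists_maximal T (hexists h hh1 hh2)
    exact ⟨c, ⟨hc, hce, hcm⟩, fun y hy => huniq h y c hy ⟨hc, hce, hcm⟩⟩
  · -- Part 2: the selected cell lies at the right end of its row.
    rintro h hh1 hh2 c ⟨hc, hce, hcm⟩ hmem
    have hm_ge : h ≤ T.entry (c.1, c.2 + 1) := by
      have := T.row_weak c.1 c.2 (c.2 + 1) (by omega) (pair_mem T hc) hmem
      rw [Prod.mk.eta] at this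
      omega
    rcases eq_or_lt_of_le hm_ge with heq | hlt
    · refine hcm (c.1, c.2 + 1) hmem heq.symm ⟨le_refl _, by omega, ?_⟩
      intro hEq
      have := congrArg Prod.snd hEq
      simp only [Prod.snd] at this
      omega
    · obtain ⟨x, hx, hxe, hxlt⟩ := exists_entry_of_above T (m := h)
        (q := T.entry (c.1, c.2 + 1) - h) (p := c.1 + 1) hh1 hmem (by omega)
        (by exact Nat.lt_succ_self c.1)
      have hxr : x.1 < c.1 := by omega
      by_cases hx2 : x.2 ≤ c.2
      · have := entry_strict T hx hc hxr hx2
        omega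
      · refine hcm x hx hxe ⟨hxr.le, by omega, ?_⟩
        intro hEq
        have := congrArg Prod.fst hEq
        omega
  · -- Part 3: vertical strip property.
    rintro h hh2 hhl c c' ⟨hc, hce, hcm⟩ ⟨hc', hce', hcm'⟩
    obtain ⟨b, hb, hbe, hblt⟩ := exists_entry_of_above T (m := h - 1) (q := 1)
      (p := c'.1 + 1) (by omega) hc' (by omega) (by omega)
    have hrow : c.1 < c'.1 := by
      by_cases hbc : b = c
      · rw [hbc] at hblt; omega
      · by_cases hb1 : c.1 < b.1
        · omega
        · have hb2 : b.2 < c.2 := by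
            by_contra hh
            exact hcm b hb hbe ⟨by omega, by omega, hbc⟩
          rcases lt_or_eq_of_le (le_of_not_gt hb1) with hb1' | hb1'
          · have := entry_strict T hb hc hb1' hb2.le
            omega
          · omega
    constructor
    · exact hrow
    · by_contra hcol
      have hcol' : c.2 < c'.2 := by omega
      have hx : (c.1, c'.2) ∈ T.supp :=
        rect_mem T (pair_mem T hc) (pair_mem T hc') hrow.le hcol'.le
      have r1 : T.entry (c.1, c.2) ≤ T.entry (c.1, c'.2) :=
        T.row_weak c.1 c.2 c'.2 hcol'.le (pair_mem T hc) hx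
      have r2 : T.entry (c.1, c'.2) < T.entry (c'.1, c'.2) :=
        T.col_strict c.1 c'.1 c'.2 hrow hx (pair_mem T hc')
      rw [Prod.mk.eta] at r1
      rw [Prod.mk.eta] at r2
      refine hcm (c.1, c'.2) hx (by omega) ⟨le_refl _, hcol'.le, ?_⟩
      intro hEq
      have := congrArg Prod.snd hEq
      simp only [Prod.snd] at this
      omega

end HTW
end

section
/- Let T be a Littlewood–Richardson tableau with largest entry ℓ_0, and for 1 ≤ h ≤ ℓ_0 let C_1(h) be the unique cell of T containing h with no other cell containing h northeast of it. Then the set of cells of T remaining after removing the cells C_1(1), …, C_1(ℓ_0) is again a skew Young diagram. -/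
open MvPolynomial Matrix Finset

namespace HTW

section PeelAux

variable {T : LRTableau} {dd ff : ℕ → ℕ}

/-- Equal entries form a horizontal strip: a same-entry cell strictly further right
is weakly higher. -/
private lemma lemA (hdd : Antitone dd)
    (hmem : ∀ c : ℕ × ℕ, c ∈ T.supp ↔ dd c.2 ≤ c.1 ∧ c.1 < ff c.2)
    {c c' : ℕ × ℕ} (hc : c ∈ T.supp) (hc' : c' ∈ T.supp)
    (he : T.entry c = T.entry c') (hlt : c.2 < c'.2) : c'.1 ≤ c.1 := by
  obtain ⟨a, i⟩ := c; obtain ⟨b, i'⟩ := c'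
  dsimp only at hlt ⊢
  by_contra hab
  push_neg at hab
  have h1 := (hmem (a, i)).1 hc
  have h2 := (hmem (b, i')).1 hc'
  dsimp only at h1 h2
  have hm : (a, i') ∈ T.supp := by
    rw [hmem]
    dsimp only
    exact ⟨le_trans (hdd hlt.le) h1.1, by omega⟩
  have hw := T.row_weak a i i' hlt.le hc hm
  have hs := T.col_strict a b i' hab hm hc'
  omega

/-- Two same-entry cells in the same column coincide. -/
private lemma lemColU {c c' : ℕ × ℕ} (hc : c ∈ T.supp) (hc' : c' ∈ T.supp)
    (he : T.entry c = T.entry c') (h2 : c.2 = c'.2) : c = c' := by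
  obtain ⟨a, i⟩ := c; obtain ⟨b, i'⟩ := c'
  dsimp only at h2 ⊢
  subst h2
  rcases lt_trichotomy a b with h | h | h
  · have := T.col_strict a b i h hc hc'; omega
  · rw [h]
  · have := T.col_strict b a i h hc' hc; omega

/-- Characterization of selected cells: those strictly right of every other
same-entry cell. -/
private lemma selChar (hdd : Antitone dd)
    (hmem : ∀ c : ℕ × ℕ, c ∈ T.supp ↔ dd c.2 ≤ c.1 ∧ c.1 < ff c.2) {c : ℕ × ℕ} :
    c ∈ selected T.entry T.supp ↔ c ∈ T.supp ∧
      ∀ z ∈ T.supp, T.entry z = T.entry c → z ≠ c → z.2 < c.2 := by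
  unfold selected
  rw [Finset.mem_filter]
  constructor
  · rintro ⟨hc, hno⟩
    refine ⟨hc, fun z hz he hne => ?_⟩
    by_contra hge
    push_neg at hge
    rcases eq_or_lt_of_le hge with h | h
    · exact hne (lemColU hz hc he h.symm)
    · have hr := lemA hdd hmem hc hz he.symm h
      exact hno z hz he ⟨hr, hge, hne⟩
  · rintro ⟨hc, hp⟩
    refine ⟨hc, fun z hz he hne => ?_⟩
    obtain ⟨h1, h2, h3⟩ := hne
    exact absurd (hp z hz he h3) (not_lt.2 h2)

/-- A selected cell is weakly above every same-entry cell. -/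
private lemma selRowMin (hdd : Antitone dd)
    (hmem : ∀ c : ℕ × ℕ, c ∈ T.supp ↔ dd c.2 ≤ c.1 ∧ c.1 < ff c.2)
    {c z : ℕ × ℕ} (hc : c ∈ selected T.entry T.supp)
    (hz : z ∈ T.supp) (he : T.entry z = T.entry c) : c.1 ≤ z.1 := by
  rcases eq_or_ne z c with rfl | hne
  · exact le_refl _
  · have hcc := (selChar hdd hmem).1 hc
    exact lemA hdd hmem hz hcc.1 he (hcc.2 z hz he hne)

/-- Each occurring value has a selected cell: the rightmost one. -/
private lemma selExists (hdd : Antitone dd)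
    (hmem : ∀ c : ℕ × ℕ, c ∈ T.supp ↔ dd c.2 ≤ c.1 ∧ c.1 < ff c.2)
    {m : ℕ} (hm : ∃ z ∈ T.supp, T.entry z = m) :
    ∃ c ∈ selected T.entry T.supp, T.entry c = m := by
  obtain ⟨z0, hz0, hz0e⟩ := hm
  have hne : (T.supp.filter fun c => T.entry c = m).Nonempty :=
    ⟨z0, Finset.mem_filter.2 ⟨hz0, hz0e⟩⟩
  obtain ⟨c, hcmem, hcmax⟩ := Finset.exists_max_image _ Prod.snd hne
  rw [Finset.mem_filter] at hcmem
  refine ⟨c, (selChar hdd hmem).2 ⟨hcmem.1, fun z hz he hne' => ?_⟩, hcmem.2⟩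
  have hzm : z ∈ T.supp.filter fun c => T.entry c = m :=
    Finset.mem_filter.2 ⟨hz, he.trans hcmem.2⟩
  have hle := hcmax z hzm
  rcases eq_or_lt_of_le hle with h | h
  · exact absurd (lemColU hz hcmem.1 he h) hne'
  · exact h

/-- The selected cell of a given entry value is unique. -/
private lemma selUnique (hdd : Antitone dd)
    (hmem : ∀ c : ℕ × ℕ, c ∈ T.supp ↔ dd c.2 ≤ c.1 ∧ c.1 < ff c.2)
    {c c' : ℕ × ℕ} (hc : c ∈ selected T.entry T.supp)
    (hc' : c' ∈ selected T.entry T.supp) (he : T.entry c = T.entry c') : c = c' := by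
  by_contra hne
  have h1 := ((selChar hdd hmem).1 hc).2 c' ((selChar hdd hmem).1 hc').1 he.symm
    (Ne.symm hne)
  have h2 := ((selChar hdd hmem).1 hc').2 c ((selChar hdd hmem).1 hc).1 he hne
  omega

/-- If `m ≥ 2` occurs then `m - 1` occurs (from the lattice condition). -/
private lemma occPred {m : ℕ} (h2 : 2 ≤ m) (h : ∃ c ∈ T.supp, T.entry c = m) :
    ∃ c ∈ T.supp, T.entry c = m - 1 := by
  obtain ⟨c, hc, hce⟩ := h
  have hl := T.lattice m (T.supp.sup Prod.fst + 2) h2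
  have hcl : c ∈ T.supp.filter fun z => z.1 < T.supp.sup Prod.fst + 2 ∧ T.entry z = m := by
    refine Finset.mem_filter.2 ⟨hc, ?_, hce⟩
    have := Finset.le_sup (f := Prod.fst) hc
    omega
  have hpos : 0 < (T.supp.filter
      fun z => z.1 + 1 < T.supp.sup Prod.fst + 2 ∧ T.entry z = m - 1).card :=
    lt_of_lt_of_le (Finset.card_pos.2 ⟨c, hcl⟩) hl
  obtain ⟨z, hz⟩ := Finset.card_pos.1 hpos
  rw [Finset.mem_filter] at hz
  exact ⟨z, hz.1, hz.2.2⟩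

/-- There is a cell of entry one less strictly above any cell of entry `≥ 2`. -/
private lemma lemLat {c' : ℕ × ℕ} (hc' : c' ∈ T.supp) (h2 : 2 ≤ T.entry c') :
    ∃ z ∈ T.supp, T.entry z = T.entry c' - 1 ∧ z.1 < c'.1 := by
  have hl := T.lattice (T.entry c') (c'.1 + 1) h2
  have hcl : c' ∈ T.supp.filter fun z => z.1 < c'.1 + 1 ∧ T.entry z = T.entry c' :=
    Finset.mem_filter.2 ⟨hc', by omega, rfl⟩
  have hpos := lt_of_lt_of_le (Finset.card_pos.2 ⟨c', hcl⟩) hl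
  obtain ⟨z, hz⟩ := Finset.card_pos.1 hpos
  rw [Finset.mem_filter] at hz
  exact ⟨z, hz.1, hz.2.2, by omega⟩

/-- Step lemma: for consecutive values, the selected cell of the larger value is
strictly lower and weakly left. -/
private lemma lemStep (hdd : Antitone dd)
    (hmem : ∀ c : ℕ × ℕ, c ∈ T.supp ↔ dd c.2 ≤ c.1 ∧ c.1 < ff c.2)
    {c c' : ℕ × ℕ} (hc : c ∈ selected T.entry T.supp)
    (hc' : c' ∈ selected T.entry T.supp)
    (he : T.entry c' = T.entry c + 1) : c.1 < c'.1 ∧ c'.2 ≤ c.2 := by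
  have hcS := ((selChar hdd hmem).1 hc).1
  have hc'S := ((selChar hdd hmem).1 hc').1
  have h0 : T.entry c ≠ 0 := (T.mem_supp c).1 hcS
  have hent1 : 1 ≤ T.entry c := by omega
  have h2' : 2 ≤ T.entry c' := by omega
  obtain ⟨z, hz, hze, hzr⟩ := lemLat hc'S h2'
  have hze' : T.entry z = T.entry c := by omega
  have hrow : c.1 ≤ z.1 := selRowMin hdd hmem hc hz hze'
  have hrr : c.1 < c'.1 := lt_of_le_of_lt hrow hzr
  refine ⟨hrr, ?_⟩
  by_contra hcol
  push_neg at hcol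
  have hmS : (c.1, c'.2) ∈ T.supp := by
    rw [hmem]
    exact ⟨le_trans (hdd hcol.le) ((hmem c).1 hcS).1,
      lt_trans hrr ((hmem c').1 hc'S).2⟩
  have hw := T.row_weak c.1 c.2 c'.2 hcol.le (by rwa [Prod.mk.eta]) hmS
  have hs := T.col_strict c.1 c'.1 c'.2 hrr hmS (by rwa [Prod.mk.eta])
  rw [Prod.mk.eta] at hw hs
  have hne : (c.1, c'.2) ≠ c := by
    intro h
    have := congrArg Prod.snd h
    dsimp only at this
    omega
  have := ((selChar hdd hmem).1 hc).2 (c.1, c'.2) hmS (by omega) hne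
  dsimp only at this
  omega

/-- Chain: below the entry of any selected cell, every value has a selected cell
weakly to the right. -/
private lemma selMono (hdd : Antitone dd)
    (hmem : ∀ c : ℕ × ℕ, c ∈ T.supp ↔ dd c.2 ≤ c.1 ∧ c.1 < ff c.2) :
    ∀ n : ℕ, ∀ c' ∈ selected T.entry T.supp, ∀ m, 1 ≤ m →
      T.entry c' = m + n →
      ∃ c ∈ selected T.entry T.supp, T.entry c = m ∧ c'.2 ≤ c.2 := by
  intro n
  induction n with
  | zero =>
    intro c' hc' m hm he
    exact ⟨c', hc', by omega, le_refl _⟩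
  | succ k ih =>
    intro c' hc' m hm he
    obtain ⟨c1, hc1, hc1e, hc1c⟩ := ih c' hc' (m + 1) (by omega) (by omega)
    have hc1S := ((selChar hdd hmem).1 hc1).1
    have hocc : ∃ z ∈ T.supp, T.entry z = m := by
      have := occPred (m := m + 1) (by omega) ⟨c1, hc1S, hc1e⟩
      simpa using this
    obtain ⟨c, hc, hce⟩ := selExists hdd hmem hocc
    have hst := lemStep hdd hmem hc hc1 (by omega)
    exact ⟨c, hc, hce, le_trans hc1c hst.2⟩

/-- Corollary: any cell with entry larger than that of a selected cell `c` has its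
selected representative weakly left of `c`. -/
private lemma selMaxCol (hdd : Antitone dd)
    (hmem : ∀ c : ℕ × ℕ, c ∈ T.supp ↔ dd c.2 ≤ c.1 ∧ c.1 < ff c.2)
    {c z : ℕ × ℕ} (hc : c ∈ selected T.entry T.supp) (hz : z ∈ T.supp)
    (hlt : T.entry c < T.entry z) :
    ∃ cg ∈ selected T.entry T.supp, T.entry cg = T.entry z ∧ cg.2 ≤ c.2 := by
  obtain ⟨cg, hcg, hcge⟩ := selExists hdd hmem ⟨z, hz, rfl⟩
  have hcS0 := ((selChar hdd hmem).1 hc).1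
  have h0 : T.entry c ≠ 0 := (T.mem_supp c).1 hcS0
  have h1 : 1 ≤ T.entry c := by omega
  obtain ⟨c0, hc0, hc0e, hc0c⟩ :=
    selMono hdd hmem (T.entry z - T.entry c) cg hcg (T.entry c) h1 (by omega)
  have hcc : c0 = c := selUnique hdd hmem hc0 hc (by omega)
  exact ⟨cg, hcg, hcge, hcc ▸ hc0c⟩

/-- Downward closure: the cell directly below a selected cell, if present, is
selected. -/
private lemma claimD (hdd : Antitone dd)
    (hmem : ∀ c : ℕ × ℕ, c ∈ T.supp ↔ dd c.2 ≤ c.1 ∧ c.1 < ff c.2)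
    {c : ℕ × ℕ} (hc : c ∈ selected T.entry T.supp)
    (hS : (c.1 + 1, c.2) ∈ T.supp) : (c.1 + 1, c.2) ∈ selected T.entry T.supp := by
  have hcS := ((selChar hdd hmem).1 hc).1
  have hlt : T.entry c < T.entry (c.1 + 1, c.2) := by
    have := T.col_strict c.1 (c.1 + 1) c.2 (by omega) (by rwa [Prod.mk.eta]) hS
    rwa [Prod.mk.eta] at this
  obtain ⟨cg, hcg, hcge, hcgc⟩ := selMaxCol hdd hmem hc hS hlt
  have heq : (c.1 + 1, c.2) = cg := by
    by_contra hne
    have := ((selChar hdd hmem).1 hcg).2 (c.1 + 1, c.2) hS hcge.symm hne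
    dsimp only at this
    omega
  rw [heq]; exact hcg

/-- Key claim: a selected cell lies weakly below the bottom of every column strictly
to its right. -/
private lemma keyClaim (hdd : Antitone dd)
    (hmem : ∀ c : ℕ × ℕ, c ∈ T.supp ↔ dd c.2 ≤ c.1 ∧ c.1 < ff c.2)
    {c : ℕ × ℕ} (hc : c ∈ selected T.entry T.supp) {j' : ℕ} (hj : c.2 < j') :
    ff j' ≤ c.1 := by
  by_contra hlt
  push_neg at hlt
  have hcS := ((selChar hdd hmem).1 hc).1
  have hzS : (c.1, j') ∈ T.supp := by
    rw [hmem]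
    exact ⟨le_trans (hdd hj.le) ((hmem c).1 hcS).1, hlt⟩
  have hw := T.row_weak c.1 c.2 j' hj.le (by rwa [Prod.mk.eta]) hzS
  rw [Prod.mk.eta] at hw
  rcases eq_or_lt_of_le hw with heq | hgt
  · have hne : (c.1, j') ≠ c := by
      intro h
      have := congrArg Prod.snd h
      dsimp only at this
      omega
    have := ((selChar hdd hmem).1 hc).2 (c.1, j') hzS heq.symm hne
    dsimp only at this
    omega
  · obtain ⟨cg, hcg, hcge, hcgc⟩ := selMaxCol hdd hmem hc hzS hgt
    have hne : (c.1, j') ≠ cg := by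
      intro h
      have := congrArg Prod.snd h
      dsimp only at this
      omega
    have := ((selChar hdd hmem).1 hcg).2 (c.1, j') hzS hcge.symm hne
    dsimp only at this
    omega

end PeelAux

/-- Removing from an LR tableau `T` the cells
`C_1(1), …, C_1(ℓ_0)` (the northeast-most occurrences of each entry, i.e. the cells
selected by one peeling step) leaves a set of cells which is again a skew Young
diagram. -/
theorem isSkewDiagram_peel (T : LRTableau) :
    IsSkewDiagram (peel T.entry T.supp) := by
  classical
  obtain ⟨dd, ff, hdd, hff, hdf, hmem⟩ := T.skew
  have hselS : ∀ c ∈ selected T.entry T.supp, c ∈ T.supp :=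
    fun c hc => ((selChar hdd hmem).1 hc).1
  -- the new bottom of column `j`
  set F : ℕ → ℕ := fun j =>
    (insert (ff j)
      (((selected T.entry T.supp).filter fun c => c.2 = j).image Prod.fst)).min'
      (Finset.insert_nonempty _ _) with hF
  have Fle : ∀ j, F j ≤ ff j := fun j =>
    Finset.min'_le _ _ (Finset.mem_insert_self _ _)
  have Fsel : ∀ j, ∀ c ∈ selected T.entry T.supp, c.2 = j → F j ≤ c.1 := by
    intro j c hc hcj
    exact Finset.min'_le _ _ (Finset.mem_insert_of_mem
      (Finset.mem_image_of_mem Prod.fst (Finset.mem_filter.2 ⟨hc, hcj⟩)))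
  have Fcases : ∀ j, F j = ff j ∨ (F j, j) ∈ selected T.entry T.supp := by
    intro j
    have hm := Finset.min'_mem (insert (ff j)
      (((selected T.entry T.supp).filter fun c => c.2 = j).image Prod.fst))
      (Finset.insert_nonempty _ _)
    rw [Finset.mem_insert] at hm
    rcases hm with h | h
    · exact Or.inl h
    · right
      obtain ⟨c, hc, hce⟩ := Finset.mem_image.1 h
      rw [Finset.mem_filter] at hc
      obtain ⟨c1, c2⟩ := c
      dsimp only at hce
      obtain ⟨hcsel, hc2⟩ := hc
      dsimp only at hc2
      subst hc2
      rw [hce] at hcsel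
      exact hcsel
  -- upward closure within a column
  have upclosed : ∀ j t, (t, j) ∈ selected T.entry T.supp →
      ∀ x, t ≤ x → x < ff j → (x, j) ∈ selected T.entry T.supp := by
    intro j t htj x hx
    induction x, hx using Nat.le_induction with
    | base => intro _; exact htj
    | succ y hy ih =>
      intro hxff
      have hysel := ih (by omega)
      have hyS := hselS _ hysel
      have h1 := (hmem (y, j)).1 hyS
      dsimp only at h1
      have hS : (y + 1, j) ∈ T.supp := by
        rw [hmem]
        dsimp only
        exact ⟨by omega, hxff⟩
      have := claimD hdd hmem hysel (by simpa using hS)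
      simpa using this
  refine ⟨dd, F, hdd, ?_, ?_, ?_⟩
  · -- Antitone F
    intro j j' hjj
    have h1 : F j' ≤ ff j' := Fle j'
    rcases Fcases j with h | h
    · exact le_trans h1 (le_trans (hff hjj) h.ge)
    · rcases eq_or_lt_of_le hjj with rfl | hlt
      · exact le_refl _
      · have := keyClaim hdd hmem h (j' := j') (by simpa using hlt)
        dsimp only at this
        omega
  · -- dd ≤ F
    intro j
    rcases Fcases j with h | h
    · rw [h]; exact hdf j
    · have := (hmem (F j, j)).1 (hselS _ h)
      dsimp only at this
      exact this.1
  · -- membership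
    intro c
    obtain ⟨a, j⟩ := c
    rw [peel, Finset.mem_sdiff]
    dsimp only
    constructor
    · rintro ⟨hS, hns⟩
      have h1 := (hmem (a, j)).1 hS
      dsimp only at h1
      refine ⟨h1.1, ?_⟩
      by_contra hge
      push_neg at hge
      rcases Fcases j with hFe | hFs
      · omega
      · exact hns (upclosed j (F j) hFs a hge h1.2)
    · rintro ⟨h1, h2⟩
      have hS : (a, j) ∈ T.supp := by
        rw [hmem]
        exact ⟨h1, lt_of_lt_of_le h2 (Fle j)⟩
      refine ⟨hS, fun hsel' => ?_⟩
      have := Fsel j (a, j) hsel' rfl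
      dsimp only at this
      omega

end HTW
end
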